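/- arXiv:1412.2039 — 10 statements merged into one kernel-verified Lean document; each statement's English description precedes it below -/
import Mathlib

section
/- Let (E,ρ) be a complete separable metric space, let ε, δ > 0, and let μ₁, μ₂ be finite Borel measures on E. Assume dPr(μ₁,μ₂) < δ and that there is a finite Borel measure μ₁' with μ₁' ≤ μ₁ and ‖μ₁ − μ₁'‖ ≤ ε. Then there exists a finite Borel measure μ₂' with μ₂' ≤ μ₂, dPr(μ₁',μ₂') < δ, and ‖μ₂ − μ₂'‖ ≤ ε. -/
open MeasureTheory Filter Topology ENNReal

/-- The variational distance `‖μ − ν‖ = sup_B |μ(B) − ν(B)|` between finite measures. -/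
noncomputable def varDist {E : Type*} [MeasurableSpace E] (μ ν : Measure E) : ℝ≥0∞ :=
  ⨆ (B : Set E) (_ : MeasurableSet B), max (μ B - ν B) (ν B - μ B)

/-- The Prohorov metric between finite Borel measures on a metric space:
`inf {ε > 0 | μ A ≤ ν (Aᵉ) + ε and ν A ≤ μ (Aᵉ) + ε for all Borel A}`,
where `Aᵉ` is the open `ε`-neighbourhood (thickening) of `A`. -/
noncomputable def dPr {E : Type*} [PseudoMetricSpace E] [MeasurableSpace E]
    (μ ν : Measure E) : ℝ :=
  sInf {ε : ℝ | 0 < ε ∧ ∀ A : Set E, MeasurableSet A →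
    μ A ≤ ν (Metric.thickening ε A) + ENNReal.ofReal ε ∧
    ν A ≤ μ (Metric.thickening ε A) + ENNReal.ofReal ε}

/-!
Cover `E`, up to a set of small mass, by finitely many disjoint Borel cells of diameter at most
`s`, and join two cells when they come within distance `η` of each other. Prohorov closeness of
`μ₁` and `μ₂` at level `η` says that every cut of this bipartite cell graph has large capacity, so
by Hall's theorem (applied after scaling the cell masses and rounding them to integers) almost all
of the mass of `μ₁` can be transported along the graph into `μ₂`. Cutting the flow out of each
cell down to the mass that `μ₁'` has there, and removing from each cell of `μ₂` the flow that was
dropped, gives `μ₂'`: the dropped mass is at most `‖μ₁ - μ₁'‖`, and the surviving flow shows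
`dPr(μ₁', μ₂') ≤ η + 3s`.
-/

open Finset

section Transport

variable {ι κ : Type*} [DecidableEq κ]

def relImage [Fintype κ] (r : ι → κ → Prop) [DecidableRel r] (S : Finset ι) : Finset κ :=
  S.biUnion fun j => {k | r j k}

def cutValue {M : Type*} [AddCommMonoid M] [Fintype ι] [DecidableEq ι] [Fintype κ]
    (r : ι → κ → Prop) [DecidableRel r] (a : ι → M) (b : κ → M) (S : Finset ι) : M :=
  ∑ j ∈ Sᶜ, a j + ∑ k ∈ relImage r S, b k

lemma mem_relImage [Fintype κ] {r : ι → κ → Prop} [DecidableRel r] {S : Finset ι} {k : κ} :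
    k ∈ relImage r S ↔ ∃ j ∈ S, r j k := by
  simp [relImage]

/-- `A j` copies of each `j` on the left; `B k` copies of each `k` and `D` wildcards on the
right. -/
def blowupRel (r : ι → κ → Prop) (A : ι → ℕ) (B : κ → ℕ) (D : ℕ) :
    (Σ j, Fin (A j)) → (Σ k, Fin (B k)) ⊕ Fin D → Prop
  | l, .inl p => r l.1 p.1
  | _, .inr _ => True

lemma exists_injective_blowupRel [Fintype ι] [DecidableEq ι] [Fintype κ] {r : ι → κ → Prop}
    [DecidableRel r] {A : ι → ℕ} {B : κ → ℕ} {C : ℕ}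
    (hcut : ∀ S, C ≤ cutValue r A B S) :
    ∃ f : (Σ j, Fin (A j)) → (Σ k, Fin (B k)) ⊕ Fin (∑ j, A j - C),
      f.Injective ∧ ∀ l, blowupRel r A B _ l (f l) := by
  classical
  refine (Fintype.all_card_le_filter_rel_iff_exists_injective _).1 fun W => ?_
  rcases W.eq_empty_or_nonempty with rfl | ⟨l₀, hl₀⟩
  · simp
  set S := W.image Sigma.fst
  have hW : #W ≤ ∑ j ∈ S, A j :=
    calc #W ≤ #(S.sigma fun j => (univ : Finset (Fin (A j)))) :=
          card_le_card fun l hl => mem_sigma.2 ⟨mem_image_of_mem _ hl, mem_univ _⟩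
      _ = ∑ j ∈ S, A j := by simp [card_sigma]
  have hnbhd : ∑ k ∈ relImage r S, B k + (∑ j, A j - C) ≤
      #{x | ∃ l ∈ W, blowupRel r A B _ l x} :=
    calc _ = #(((relImage r S).sigma fun k => (univ : Finset (Fin (B k)))).disjSum
            (univ : Finset (Fin (∑ j, A j - C)))) := by simp [card_sigma]
      _ ≤ _ := by
        refine card_le_card fun x hx => ?_
        rcases x with ⟨k, i⟩ | d
        · obtain ⟨j, hjS, hjk⟩ := mem_relImage.1 (mem_sigma.1 (inl_mem_disjSum.1 hx)).1
          obtain ⟨l, hl, rfl⟩ := mem_image.1 hjS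
          exact mem_filter.2 ⟨mem_univ _, l, hl, hjk⟩
        · exact mem_filter.2 ⟨mem_univ _, l₀, hl₀, trivial⟩
  have hsplit := sum_add_sum_compl S A
  have := hcut S
  rw [cutValue] at this
  omega

variable {r : ι → κ → Prop} {A : ι → ℕ} {B : κ → ℕ} {D : ℕ}
  {f : (Σ j, Fin (A j)) → (Σ k, Fin (B k)) ⊕ Fin D}

def matchCount (f : (Σ j, Fin (A j)) → (Σ k, Fin (B k)) ⊕ Fin D) (j : ι) (k : κ) : ℕ :=
  #{i : Fin (A j) | ∃ i', f ⟨j, i⟩ = .inl ⟨k, i'⟩}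

lemma rel_of_matchCount_ne_zero (hf : ∀ l, blowupRel r A B D l (f l)) {j : ι} {k : κ}
    (h : matchCount f j k ≠ 0) : r j k := by
  obtain ⟨i, hi⟩ := card_ne_zero.1 h
  obtain ⟨i', hi'⟩ := (mem_filter.1 hi).2
  simpa [blowupRel, hi'] using hf ⟨j, i⟩

lemma sum_matchCount_le [Fintype κ] (j : ι) : ∑ k, matchCount f j k ≤ A j := by
  simp only [matchCount]
  rw [← card_biUnion]
  · exact (card_le_univ _).trans_eq (Fintype.card_fin _)
  · intro k₁ _ k₂ _ hne
    simp only [Function.onFun, disjoint_left, mem_filter]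
    rintro i ⟨-, i₁, h₁⟩ ⟨-, i₂, h₂⟩
    exact hne (congrArg Sigma.fst (Sum.inl_injective (h₁.symm.trans h₂)))

lemma sum_matchCount_eq_card [Fintype ι] (k : κ) :
    ∑ j, matchCount f j k = #{l | ∃ i', f l = .inl ⟨k, i'⟩} := by
  simp only [matchCount, card_filter, Fintype.sum_sigma]

lemma sum_matchCount_le_right [Fintype ι] (hf : f.Injective) (k : κ) :
    ∑ j, matchCount f j k ≤ B k := by
  rw [sum_matchCount_eq_card]
  calc _ ≤ #((univ : Finset (Fin (B k))).map
          ⟨fun i => .inl ⟨k, i⟩, fun _ _ h => by simpa using h⟩) :=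
        card_le_card_of_injOn f (fun l hl => by
          obtain ⟨i', hi'⟩ := (mem_filter.1 hl).2
          exact mem_map.2 ⟨i', mem_univ _, hi'.symm⟩) hf.injOn
    _ = B k := by simp

lemma sum_le_sum_matchCount_add [Fintype ι] [Fintype κ] (hf : f.Injective) :
    ∑ j, A j ≤ ∑ j, ∑ k, matchCount f j k + D := by
  classical
  calc ∑ j, A j = #(univ : Finset (Σ j, Fin (A j))) := by simp
    _ ≤ #((univ.biUnion fun k => {l | ∃ i', f l = .inl ⟨k, i'⟩}) ∪
          ({l | (f l).isRight} : Finset _)) :=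
        card_le_card fun l _ => by
          rcases hl : f l with ⟨k, i'⟩ | d <;> simp [hl]
    _ ≤ ∑ k, #{l | ∃ i', f l = .inl ⟨k, i'⟩} + #({l | (f l).isRight} : Finset _) :=
        (card_union_le _ _).trans (add_le_add card_biUnion_le le_rfl)
    _ ≤ ∑ j, ∑ k, matchCount f j k + D := by
        rw [sum_comm]
        simp only [sum_matchCount_eq_card]
        gcongr
        calc _ ≤ #((univ : Finset (Fin D)).map ⟨Sum.inr, Sum.inr_injective⟩) :=
              card_le_card_of_injOn f (fun l hl => by
                obtain ⟨d, hd⟩ := Sum.isRight_iff.1 (mem_filter.1 hl).2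
                simp [hd]) hf.injOn
          _ = D := by simp

theorem exists_nat_transport [Fintype ι] [DecidableEq ι] [Fintype κ] (r : ι → κ → Prop)
    [DecidableRel r] (A : ι → ℕ) (B : κ → ℕ) (C : ℕ)
    (hcut : ∀ S, C ≤ cutValue r A B S) :
    ∃ z : ι → κ → ℕ, (∀ j k, z j k ≠ 0 → r j k) ∧ (∀ j, ∑ k, z j k ≤ A j) ∧
      (∀ k, ∑ j, z j k ≤ B k) ∧ C ≤ ∑ j, ∑ k, z j k := by
  obtain ⟨f, hf, hfr⟩ := exists_injective_blowupRel hcut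
  refine ⟨matchCount f, fun j k => rel_of_matchCount_ne_zero hfr, sum_matchCount_le,
    sum_matchCount_le_right hf, ?_⟩
  have hC : C ≤ ∑ j, A j := by simpa [cutValue, relImage] using hcut ∅
  have := sum_le_sum_matchCount_add hf
  omega

end Transport

section Rounding

variable {ι κ : Type*} [Fintype ι] [DecidableEq ι] [Fintype κ] [DecidableEq κ]

lemma sum_le_sum_floor_add_card {α : Type*} (s : Finset α) (x : α → ℝ) :
    ∑ i ∈ s, x i ≤ ∑ i ∈ s, (⌊x i⌋₊ : ℝ) + #s :=
  calc ∑ i ∈ s, x i ≤ ∑ i ∈ s, ((⌊x i⌋₊ : ℝ) + 1) :=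
        sum_le_sum fun i _ => (Nat.lt_floor_add_one _).le
    _ = _ := by simp [sum_add_distrib]

lemma floor_mul_sub_card_le_cutValue (r : ι → κ → Prop) [DecidableRel r] {a : ι → ℝ}
    {b : κ → ℝ} {C M : ℝ} (hM : 0 ≤ M) (hcut : ∀ S, C ≤ cutValue r a b S) (S : Finset ι) :
    ⌊M * C⌋₊ - (Fintype.card ι + Fintype.card κ) ≤
      cutValue r (fun j => ⌊M * a j⌋₊) (fun k => ⌊M * b k⌋₊) S := by
  have hMC := mul_le_mul_of_nonneg_left (hcut S) hM
  rw [cutValue, mul_add, mul_sum, mul_sum] at hMC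
  have ha := sum_le_sum_floor_add_card Sᶜ (fun j => M * a j)
  have hb := sum_le_sum_floor_add_card (relImage r S) (fun k => M * b k)
  have hcard : (#Sᶜ : ℝ) + #(relImage r S) ≤ Fintype.card ι + Fintype.card κ := by
    exact_mod_cast add_le_add (card_le_univ Sᶜ) (card_le_univ _)
  have : ⌊M * C⌋₊ ≤ ∑ j ∈ Sᶜ, ⌊M * a j⌋₊ + ∑ k ∈ relImage r S, ⌊M * b k⌋₊ +
      (Fintype.card ι + Fintype.card κ) :=
    Nat.floor_le_of_le (by push_cast; linarith)
  rw [cutValue]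
  omega

theorem exists_real_transport (r : ι → κ → Prop) [DecidableRel r] {a : ι → ℝ} {b : κ → ℝ}
    (ha : ∀ j, 0 ≤ a j) (hb : ∀ k, 0 ≤ b k) {C : ℝ} (hcut : ∀ S, C ≤ cutValue r a b S) {e : ℝ}
    (he : 0 < e) :
    ∃ z : ι → κ → ℝ, (∀ j k, 0 ≤ z j k) ∧ (∀ j k, z j k ≠ 0 → r j k) ∧
      (∀ j, ∑ k, z j k ≤ a j) ∧ (∀ k, ∑ j, z j k ≤ b k) ∧ C - e ≤ ∑ j, ∑ k, z j k := by
  -- scaling by `M` and rounding down loses at most `c + 1`, which is less than `M * e`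
  set c : ℕ := Fintype.card ι + Fintype.card κ
  obtain ⟨M, hM⟩ := exists_nat_gt ((c + 1) / e)
  have hM0 : (0 : ℝ) < M := lt_trans (by positivity) hM
  have hMe : c + 1 < M * e := by rwa [div_lt_iff₀ he] at hM
  obtain ⟨Z, hZr, hZa, hZb, hZC⟩ := exists_nat_transport r (fun j => ⌊M * a j⌋₊)
    (fun k => ⌊M * b k⌋₊) (⌊M * C⌋₊ - c) (floor_mul_sub_card_le_cutValue r hM0.le hcut)
  refine ⟨fun j k => Z j k / M, fun _ _ => by positivity,
    fun j k h => hZr j k fun h0 => h (by simp [h0]), fun j => ?_, fun k => ?_, ?_⟩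
  · rw [← sum_div, div_le_iff₀ hM0, mul_comm]
    exact_mod_cast (Nat.cast_le.2 (hZa j)).trans (Nat.floor_le (mul_nonneg hM0.le (ha j)))
  · rw [← sum_div, div_le_iff₀ hM0, mul_comm]
    exact_mod_cast (Nat.cast_le.2 (hZb k)).trans (Nat.floor_le (mul_nonneg hM0.le (hb k)))
  · have hfloor := Nat.sub_one_lt_floor (M * C)
    have hsub : (⌊M * C⌋₊ : ℝ) ≤ ((⌊M * C⌋₊ - c : ℕ) : ℝ) + c := by
      exact_mod_cast (show ⌊M * C⌋₊ ≤ (⌊M * C⌋₊ - c) + c by omega)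
    have hZ : ((⌊M * C⌋₊ - c : ℕ) : ℝ) ≤ ∑ j, ∑ k, (Z j k : ℝ) := by exact_mod_cast hZC
    simp only [← sum_div]
    rw [le_div_iff₀ hM0]
    linarith

end Rounding

lemma exists_le_sum_eq {κ : Type*} [Fintype κ] {z : κ → ℝ} (hz : ∀ k, 0 ≤ z k) {t : ℝ}
    (ht : 0 ≤ t) (htz : t ≤ ∑ k, z k) :
    ∃ y : κ → ℝ, (∀ k, 0 ≤ y k) ∧ (∀ k, y k ≤ z k) ∧ ∑ k, y k = t := by
  have hsum : 0 ≤ ∑ k, z k := sum_nonneg fun k _ => hz k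
  refine ⟨fun k => z k * (t / ∑ k, z k), fun k => mul_nonneg (hz k) (div_nonneg ht hsum),
    fun k => ?_, ?_⟩
  · exact mul_le_of_le_one_right (hz k) (div_le_one_of_le₀ htz hsum)
  · rcases hsum.eq_or_lt with h | h
    · simp [← h, le_antisymm (h ▸ htz) ht]
    · rw [← sum_mul, mul_div_cancel₀ _ h.ne']

lemma sum_sum_le_sum_sum_of_ne_zero {ι κ : Type*} [Fintype ι] [Fintype κ] {y : ι → κ → ℝ}
    (hy : ∀ j k, 0 ≤ y j k) {S : Finset ι} {T : Finset κ}
    (hST : ∀ j ∈ S, ∀ k, y j k ≠ 0 → k ∈ T) :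
    ∑ j ∈ S, ∑ k, y j k ≤ ∑ k ∈ T, ∑ j, y j k :=
  calc ∑ j ∈ S, ∑ k, y j k = ∑ j ∈ S, ∑ k ∈ T, y j k :=
        sum_congr rfl fun j hj => (sum_subset (subset_univ T) fun k _ hk =>
          not_not.1 fun h => hk (hST j hj k h)).symm
    _ ≤ ∑ j, ∑ k ∈ T, y j k := sum_le_sum_of_subset_of_nonneg (subset_univ S)
        fun j _ _ => sum_nonneg fun k _ => hy j k
    _ = ∑ k ∈ T, ∑ j, y j k := sum_comm

section Cells

open Set Metric

variable {E ι : Type*} [PseudoMetricSpace E] {Q : ι → Set E} {η s : ℝ}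

def cellRel (Q : ι → Set E) (η : ℝ) (j k : ι) : Prop :=
  ∃ p ∈ Q j, ∃ q ∈ Q k, dist p q < η

lemma cellRel.symm {j k : ι} (h : cellRel Q η j k) : cellRel Q η k j := by
  obtain ⟨p, hp, q, hq, hpq⟩ := h
  exact ⟨q, hq, p, hp, by rwa [dist_comm]⟩

lemma subset_thickening_of_cellRel (hQ : ∀ k, ∀ x ∈ Q k, ∀ y ∈ Q k, dist x y ≤ s) {A : Set E}
    {j k : ι} (hjk : cellRel Q η j k) (hA : (Q j ∩ A).Nonempty) :
    Q k ⊆ thickening (η + 2 * s) A := by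
  obtain ⟨p, hp, q₀, hq₀, hpq⟩ := hjk
  obtain ⟨w, hw, hwA⟩ := hA
  intro q hq
  refine mem_thickening_iff.2 ⟨w, hwA, ?_⟩
  calc dist q w ≤ dist q q₀ + dist q₀ p + dist p w := dist_triangle4 _ _ _ _
    _ < η + 2 * s := by linarith [hQ _ q hq q₀ hq₀, hQ _ p hp w hw, dist_comm q₀ p]

end Cells

section Measures

open Set Metric Function

variable {E : Type*} [MeasurableSpace E]

variable {μ ν : Measure E}

lemma measure_le_add_ofReal_iff [IsFiniteMeasure μ] [IsFiniteMeasure ν] {A B : Set E} {c : ℝ}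
    (hc : 0 ≤ c) : μ A ≤ ν B + ENNReal.ofReal c ↔ μ.real A ≤ ν.real B + c := by
  rw [← ofReal_measureReal (μ := μ), ← ofReal_measureReal (μ := ν),
    ← ENNReal.ofReal_add measureReal_nonneg hc, ENNReal.ofReal_le_ofReal_iff (by positivity)]

lemma measureReal_le_of_le [IsFiniteMeasure μ] (h : ν ≤ μ) (A : Set E) : ν.real A ≤ μ.real A :=
  ENNReal.toReal_mono (measure_ne_top μ A) (h A)

lemma measureReal_sub_apply [IsFiniteMeasure μ] (h : ν ≤ μ) {A : Set E} (hA : MeasurableSet A) :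
    (μ - ν).real A = μ.real A - ν.real A := by
  have : IsFiniteMeasure ν := isFiniteMeasure_of_le μ h
  rw [measureReal_def, Measure.sub_apply hA h,
    ENNReal.toReal_sub_of_le (h A) (measure_ne_top _ _)]
  rfl

lemma varDist_eq_ofReal_of_le [IsFiniteMeasure μ] (h : ν ≤ μ) :
    varDist μ ν = ENNReal.ofReal (μ.real univ - ν.real univ) := by
  have : IsFiniteMeasure ν := isFiniteMeasure_of_le μ h
  rw [ENNReal.ofReal_sub _ measureReal_nonneg, ofReal_measureReal, ofReal_measureReal]
  refine le_antisymm (iSup₂_le fun B hB => ?_) (le_iSup₂_of_le univ MeasurableSet.univ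
    (le_max_left _ _))
  rw [tsub_eq_zero_of_le (h B), max_eq_left zero_le]
  calc μ B - ν B = (μ - ν) B := (Measure.sub_apply hB h).symm
    _ ≤ (μ - ν) univ := measure_mono (subset_univ _)
    _ = μ univ - ν univ := Measure.sub_apply MeasurableSet.univ h

section Partition

variable {ι : Type*} {Q : ι → Set E} (hQm : ∀ k, MeasurableSet (Q k))
  (hQd : Pairwise (Disjoint on Q))
include hQm hQd

lemma measureReal_biUnion_cells [IsFiniteMeasure μ] (S : Finset ι) :
    μ.real (⋃ k ∈ S, Q k) = ∑ k ∈ S, μ.real (Q k) :=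
  measureReal_biUnion_finset (hQd.set_pairwise _) fun k _ => hQm k

lemma measureReal_univ_eq_sum_cells_add [Fintype ι] [IsFiniteMeasure μ] :
    μ.real univ = ∑ k, μ.real (Q k) + μ.real (⋃ k, Q k)ᶜ := by
  rw [← measureReal_iUnion_fintype hQd hQm,
    measureReal_add_measureReal_compl (MeasurableSet.iUnion hQm)]

lemma exists_le_measureReal_cells_eq [Fintype ι] [IsFiniteMeasure μ] {m : ι → ℝ}
    (hm0 : ∀ k, 0 ≤ m k) (hm : ∀ k, m k ≤ μ.real (Q k)) :
    ∃ ν ≤ μ, (∀ k, ν.real (Q k) = m k) ∧ ν.real (⋃ k, Q k)ᶜ = 0 := by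
  set c : ι → ℝ≥0∞ := fun k => ENNReal.ofReal (m k / μ.real (Q k))
  set ν : Measure E := ∑ k, c k • μ.restrict (Q k)
  have hν : ∀ B, MeasurableSet B → ν B = ∑ k, c k * μ (B ∩ Q k) := fun B hB => by
    simp [ν, Measure.finsetSum_apply, Measure.restrict_apply hB]
  have hνμ : ν ≤ μ := by
    refine Measure.le_iff.2 fun B hB => ?_
    calc ν B ≤ ∑ k, μ (B ∩ Q k) := by
          rw [hν B hB]
          refine sum_le_sum fun k _ => mul_le_of_le_one_left' ?_
          exact ENNReal.ofReal_le_one.2 (div_le_one_of_le₀ (hm k) measureReal_nonneg)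
      _ = μ (⋃ k, B ∩ Q k) := by
          rw [measure_iUnion (fun k l hkl => (hQd hkl).mono inter_subset_right
            inter_subset_right) fun k => hB.inter (hQm k), tsum_fintype]
      _ ≤ μ B := measure_mono (iUnion_subset fun k => inter_subset_left)
  refine ⟨ν, hνμ, fun k => ?_, ?_⟩
  · rw [measureReal_def, hν _ (hQm k), sum_eq_single k (fun l _ hlk => by
      rw [(hQd hlk.symm).inter_eq, measure_empty, mul_zero]) (by simp), inter_self,
      ← ofReal_measureReal, ← ENNReal.ofReal_mul (div_nonneg (hm0 k) measureReal_nonneg)]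
    rcases (measureReal_nonneg (μ := μ) (s := Q k)).eq_or_lt with h | h
    · simp [← h, le_antisymm (h ▸ hm k) (hm0 k)]
    · rw [div_mul_cancel₀ _ h.ne', ENNReal.toReal_ofReal (hm0 k)]
  · rw [measureReal_def, hν _ (MeasurableSet.iUnion hQm).compl, sum_eq_zero fun k _ => by
      rw [inter_comm, (disjoint_compl_right_iff_subset.2 (subset_iUnion Q k)).inter_eq,
        measure_empty, mul_zero], ENNReal.toReal_zero]

lemma exists_le_measureReal_cells_eq_sub [Fintype ι] [IsFiniteMeasure μ] {m : ι → ℝ}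
    (hm0 : ∀ k, 0 ≤ m k) (hm : ∀ k, m k ≤ μ.real (Q k)) :
    ∃ μ' ≤ μ, (∀ k, μ'.real (Q k) = μ.real (Q k) - m k) ∧
      μ.real univ - μ'.real univ = ∑ k, m k := by
  obtain ⟨ν, hνμ, hνQ, hνW⟩ := exists_le_measureReal_cells_eq hQm hQd hm0 hm
  have : IsFiniteMeasure ν := isFiniteMeasure_of_le μ hνμ
  refine ⟨μ - ν, Measure.sub_le, fun k => by rw [measureReal_sub_apply hνμ (hQm k), hνQ], ?_⟩
  rw [measureReal_sub_apply hνμ MeasurableSet.univ, _root_.sub_sub_cancel,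
    measureReal_univ_eq_sum_cells_add hQm hQd, hνW, add_zero]
  exact sum_congr rfl fun k _ => hνQ k

lemma sum_sub_min_le_measureReal_univ_sub [Fintype ι] [IsFiniteMeasure μ] (h : ν ≤ μ)
    {r : ι → ℝ} (hr : ∀ j, r j ≤ μ.real (Q j)) :
    ∑ j, (r j - min (r j) (ν.real (Q j))) ≤ μ.real univ - ν.real univ := by
  have : IsFiniteMeasure ν := isFiniteMeasure_of_le μ h
  have e := measureReal_univ_eq_sum_cells_add hQm hQd (μ := μ)
  have e' := measureReal_univ_eq_sum_cells_add hQm hQd (μ := ν)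
  have hW := measureReal_le_of_le h (⋃ k, Q k)ᶜ
  calc _ ≤ ∑ j, (μ.real (Q j) - ν.real (Q j)) := sum_le_sum fun j _ => by
        rcases min_choice (r j) (ν.real (Q j)) with hmin | hmin <;> rw [hmin] <;>
          linarith [hr j, measureReal_le_of_le h (Q j)]
    _ ≤ _ := by rw [sum_sub_distrib]; linarith

end Partition

variable [PseudoMetricSpace E]

lemma exists_forall_le_thickening_of_dPr_lt [IsFiniteMeasure μ] [IsFiniteMeasure ν] {δ : ℝ}
    (h : dPr μ ν < δ) : ∃ η < δ, 0 < η ∧ ∀ A, MeasurableSet A →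
      μ A ≤ ν (thickening η A) + ENNReal.ofReal η ∧
      ν A ≤ μ (thickening η A) + ENNReal.ofReal η := by
  set m := μ.real univ + ν.real univ + 1
  have hμ : μ univ ≤ ENNReal.ofReal m := by
    rw [← ofReal_measureReal]
    exact ENNReal.ofReal_le_ofReal (by linarith [measureReal_nonneg (μ := ν) (s := univ)])
  have hν : ν univ ≤ ENNReal.ofReal m := by
    rw [← ofReal_measureReal]
    exact ENNReal.ofReal_le_ofReal (by linarith [measureReal_nonneg (μ := μ) (s := univ)])
  have hm : m ∈ {ε : ℝ | 0 < ε ∧ ∀ A : Set E, MeasurableSet A →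
      μ A ≤ ν (thickening ε A) + ENNReal.ofReal ε ∧
      ν A ≤ μ (thickening ε A) + ENNReal.ofReal ε} :=
    ⟨by positivity, fun A _ => ⟨(measure_mono (subset_univ A)).trans (hμ.trans le_add_self),
      (measure_mono (subset_univ A)).trans (hν.trans le_add_self)⟩⟩
  obtain ⟨η, ⟨hη0, hη⟩, hηδ⟩ := (csInf_lt_iff ⟨0, fun _ hx => hx.1.le⟩ ⟨m, hm⟩).1 h
  exact ⟨η, hηδ, hη0, hη⟩

lemma dPr_le {β : ℝ} (hβ : 0 < β) (h : ∀ A, MeasurableSet A →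
      μ A ≤ ν (thickening β A) + ENNReal.ofReal β ∧
      ν A ≤ μ (thickening β A) + ENNReal.ofReal β) : dPr μ ν ≤ β :=
  csInf_le ⟨0, fun _ hx => hx.1.le⟩ ⟨hβ, h⟩

lemma exists_cells_measureReal_compl_le [OpensMeasurableSpace E] [TopologicalSpace.SeparableSpace E]
    [IsFiniteMeasure μ] {s ε : ℝ} (hs : 0 < s) (hε : 0 < ε) :
    ∃ (N : ℕ) (Q : Fin N → Set E), (∀ k, MeasurableSet (Q k)) ∧ Pairwise (Disjoint on Q) ∧
      (∀ k, ∀ x ∈ Q k, ∀ y ∈ Q k, dist x y ≤ s) ∧ μ.real (⋃ k, Q k)ᶜ ≤ ε := by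
  obtain ⟨P, hPm, hPb, hPdiam, hPcover, hPd⟩ :=
    SeparableSpace.exists_measurable_partition_diam_le E hs
  set W : ℕ → Set E := fun N => (⋃ k : Fin N, P k)ᶜ
  have hW : Tendsto (μ ∘ W) atTop (𝓝 0) := by
    have hanti : Antitone W := fun N N' h => compl_subset_compl.2 <|
      iUnion_subset fun k => subset_iUnion_of_subset (Fin.castLE h k) subset_rfl
    have hempty : ⋂ N, W N = ∅ := by
      refine eq_empty_of_forall_notMem fun x hx => ?_
      obtain ⟨n, hn⟩ := mem_iUnion.1 (hPcover ▸ mem_univ x : x ∈ ⋃ n, P n)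
      exact mem_iInter.1 hx (n + 1) (mem_iUnion.2 ⟨⟨n, n.lt_succ_self⟩, hn⟩)
    simpa [hempty] using tendsto_measure_iInter_atTop (s := W)
      (fun N => (MeasurableSet.iUnion fun k : Fin N => hPm k).compl.nullMeasurableSet) hanti
      ⟨0, measure_ne_top μ _⟩
  obtain ⟨N, hN⟩ := (hW.eventually_lt_const (ENNReal.ofReal_pos.2 hε)).exists
  refine ⟨N, fun k => P k, fun k => hPm k, fun k l hkl => hPd (Fin.val_injective.ne hkl),
    fun k x hx y hy => dist_le_diam_of_mem (hPb k) hx hy |>.trans (hPdiam k), ?_⟩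
  rw [← ENNReal.ofReal_le_ofReal_iff hε.le, ofReal_measureReal]
  exact hN.le

section CellPlans

variable {ι : Type*} {Q : ι → Set E} {η s : ℝ} (hQm : ∀ k, MeasurableSet (Q k))
  (hQd : Pairwise (Disjoint on Q)) [IsFiniteMeasure μ] [IsFiniteMeasure ν]
include hQm hQd

lemma sum_measureReal_cells_le (hη : 0 ≤ η)
    (hPr : ∀ A, MeasurableSet A → μ A ≤ ν (thickening η A) + ENNReal.ofReal η)
    {S T : Finset ι} (hST : ∀ j ∈ S, ∀ k, cellRel Q η j k → k ∈ T) :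
    ∑ j ∈ S, μ.real (Q j) ≤ ∑ k ∈ T, ν.real (Q k) + ν.real (⋃ k, Q k)ᶜ + η := by
  have hsub : thickening η (⋃ j ∈ S, Q j) ⊆ (⋃ k ∈ T, Q k) ∪ (⋃ k, Q k)ᶜ := by
    intro q hq
    by_cases hq' : q ∈ ⋃ k, Q k
    · obtain ⟨k, hk⟩ := mem_iUnion.1 hq'
      obtain ⟨u, hu, hqu⟩ := mem_thickening_iff.1 hq
      obtain ⟨j, hj, hju⟩ := mem_iUnion₂.1 hu
      exact Or.inl (mem_iUnion₂.2 ⟨k, hST j hj k ⟨u, hju, q, hk, by rwa [dist_comm]⟩, hk⟩)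
    · exact Or.inr hq'
  calc ∑ j ∈ S, μ.real (Q j) = μ.real (⋃ j ∈ S, Q j) :=
        (measureReal_biUnion_cells hQm hQd S).symm
    _ ≤ ν.real (thickening η (⋃ j ∈ S, Q j)) + η := (measure_le_add_ofReal_iff hη).1
        (hPr _ (S.measurableSet_biUnion fun j _ => hQm j))
    _ ≤ ν.real (⋃ k ∈ T, Q k) + ν.real (⋃ k, Q k)ᶜ + η := by
        gcongr
        exact (measureReal_mono hsub).trans (measureReal_union_le _ _)
    _ = _ := by rw [measureReal_biUnion_cells hQm hQd]

lemma max_sub_le_cutValue [Fintype ι] [DecidableEq ι] [DecidableRel (cellRel Q η)] (hη : 0 ≤ η)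
    (hμW : μ.real (⋃ k, Q k)ᶜ ≤ s) (hνW : ν.real (⋃ k, Q k)ᶜ ≤ s)
    (hPr : ∀ A, MeasurableSet A → μ A ≤ ν (thickening η A) + ENNReal.ofReal η ∧
      ν A ≤ μ (thickening η A) + ENNReal.ofReal η) (S : Finset ι) :
    max (μ.real univ) (ν.real univ) - (η + 2 * s) ≤
      cutValue (cellRel Q η) (fun j => μ.real (Q j)) (fun k => ν.real (Q k)) S := by
  set T := relImage (cellRel Q η) S
  have h₁ := sum_measureReal_cells_le hQm hQd hη (fun A hA => (hPr A hA).1) (S := S) (T := T)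
    fun j hj k hjk => mem_relImage.2 ⟨j, hj, hjk⟩
  have h₂ := sum_measureReal_cells_le (μ := ν) (ν := μ) hQm hQd hη (fun A hA => (hPr A hA).2)
    (S := Tᶜ) (T := Sᶜ) fun k hk j hkj =>
      mem_compl.2 fun hj => mem_compl.1 hk (mem_relImage.2 ⟨j, hj, hkj.symm⟩)
  have e₁ := measureReal_univ_eq_sum_cells_add hQm hQd (μ := μ)
  have e₂ := measureReal_univ_eq_sum_cells_add hQm hQd (μ := ν)
  rw [← sum_add_sum_compl S] at e₁
  rw [← sum_add_sum_compl T] at e₂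
  rw [cutValue, sub_le_iff_le_add, max_le_iff]
  constructor <;> linarith

lemma measureReal_le_thickening_of_plan [Fintype ι] (hQ : ∀ k, ∀ x ∈ Q k, ∀ y ∈ Q k, dist x y ≤ s)
    {y : ι → ι → ℝ} (hy : ∀ j k, 0 ≤ y j k) (hyr : ∀ j k, y j k ≠ 0 → cellRel Q η j k)
    {d : ι → ℝ} (hd : ∀ j, 0 ≤ d j) (hμ : ∀ j, μ.real (Q j) ≤ ∑ k, y j k + d j)
    (hν : ∀ k, ∑ j, y j k ≤ ν.real (Q k)) (A : Set E) :
    μ.real A ≤ ν.real (thickening (η + 2 * s) A) + ∑ j, d j + μ.real (⋃ k, Q k)ᶜ := by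
  classical
  set J : Finset ι := {j | (Q j ∩ A).Nonempty}
  set K : Finset ι := {k | Q k ⊆ thickening (η + 2 * s) A}
  have hA : A ⊆ (⋃ j ∈ J, Q j) ∪ (⋃ k, Q k)ᶜ := by
    intro x hx
    by_cases hx' : x ∈ ⋃ k, Q k
    · obtain ⟨j, hj⟩ := mem_iUnion.1 hx'
      exact Or.inl (mem_iUnion₂.2 ⟨j, by simpa [J] using ⟨x, hj, hx⟩, hj⟩)
    · exact Or.inr hx'
  calc μ.real A ≤ ∑ j ∈ J, μ.real (Q j) + μ.real (⋃ k, Q k)ᶜ :=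
        (measureReal_mono hA).trans <| (measureReal_union_le _ _).trans <| by
          gcongr; exact measureReal_biUnion_finset_le _ _
    _ ≤ ∑ j ∈ J, ∑ k, y j k + ∑ j, d j + μ.real (⋃ k, Q k)ᶜ := by
        gcongr
        calc _ ≤ ∑ j ∈ J, (∑ k, y j k + d j) := sum_le_sum fun j _ => hμ j
          _ ≤ _ := by
            rw [sum_add_distrib]
            gcongr
            exacts [fun j _ _ => hd j, Finset.subset_univ J]
    _ ≤ ∑ k ∈ K, ∑ j, y j k + ∑ j, d j + μ.real (⋃ k, Q k)ᶜ := by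
        gcongr
        exact sum_sum_le_sum_sum_of_ne_zero hy fun j hj k hjk => by
          simpa [K] using subset_thickening_of_cellRel hQ (hyr j k hjk) (by simpa [J] using hj)
    _ ≤ ν.real (thickening (η + 2 * s) A) + ∑ j, d j + μ.real (⋃ k, Q k)ᶜ := by
        gcongr
        calc _ ≤ ∑ k ∈ K, ν.real (Q k) := sum_le_sum fun k _ => hν k
          _ = ν.real (⋃ k ∈ K, Q k) := (measureReal_biUnion_cells hQm hQd K).symm
          _ ≤ _ := measureReal_mono (iUnion₂_subset fun k hk => by simpa [K] using hk)

lemma dPr_le_of_plan [Fintype ι] (hQ : ∀ k, ∀ x ∈ Q k, ∀ y ∈ Q k, dist x y ≤ s)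
    {y : ι → ι → ℝ} (hy : ∀ j k, 0 ≤ y j k) (hyr : ∀ j k, y j k ≠ 0 → cellRel Q η j k)
    {d e : ι → ℝ} (hd : ∀ j, 0 ≤ d j) (he : ∀ k, 0 ≤ e k)
    (hrow : ∀ j, ∑ k, y j k ≤ μ.real (Q j) ∧ μ.real (Q j) ≤ ∑ k, y j k + d j)
    (hcol : ∀ k, ∑ j, y j k ≤ ν.real (Q k) ∧ ν.real (Q k) ≤ ∑ j, y j k + e k) {β : ℝ}
    (hβ0 : 0 < β) (hβ : η + 2 * s ≤ β) (hdβ : ∑ j, d j + μ.real (⋃ k, Q k)ᶜ ≤ β)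
    (heβ : ∑ k, e k + ν.real (⋃ k, Q k)ᶜ ≤ β) : dPr μ ν ≤ β := by
  refine dPr_le hβ0 fun A _ => ⟨?_, ?_⟩ <;> rw [measure_le_add_ofReal_iff hβ0.le]
  · have := measureReal_le_thickening_of_plan hQm hQd hQ hy hyr hd (fun j => (hrow j).2)
      (fun k => (hcol k).1) A
    have := measureReal_mono (μ := ν) (thickening_mono hβ A)
    linarith
  · have := measureReal_le_thickening_of_plan (μ := ν) (ν := μ) (y := fun j k => y k j) hQm hQd
      hQ (fun j k => hy k j) (fun j k h => (hyr k j h).symm) he (fun k => (hcol k).2)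
      (fun j => (hrow j).1) A
    have := measureReal_mono (μ := μ) (thickening_mono hβ A)
    linarith

lemma exists_le_dPr_le_of_cells [Fintype ι] [DecidableEq ι] {μ₁ μ₂ μ₁' : Measure E}
    [IsFiniteMeasure μ₁] [IsFiniteMeasure μ₂] [IsFiniteMeasure μ₁'] (hle : μ₁' ≤ μ₁)
    (hQ : ∀ k, ∀ x ∈ Q k, ∀ y ∈ Q k, dist x y ≤ s) (hs : 0 < s) (hη : 0 ≤ η)
    (hPr : ∀ A, MeasurableSet A → μ₁ A ≤ μ₂ (thickening η A) + ENNReal.ofReal η ∧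
      μ₂ A ≤ μ₁ (thickening η A) + ENNReal.ofReal η)
    (h₁W : μ₁.real (⋃ k, Q k)ᶜ ≤ s) (h₂W : μ₂.real (⋃ k, Q k)ᶜ ≤ s) :
    ∃ μ₂' ≤ μ₂, dPr μ₁' μ₂' ≤ η + 3 * s ∧
      μ₂.real univ - μ₂'.real univ ≤ μ₁.real univ - μ₁'.real univ := by
  classical
  obtain ⟨z, hz0, hzr, hza, hzb, hzC⟩ := exists_real_transport (cellRel Q η)
    (fun j => measureReal_nonneg) (fun k => measureReal_nonneg)
    (max_sub_le_cutValue hQm hQd hη h₁W h₂W hPr) hs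
  -- keep only as much of the flow out of each cell as `μ₁'` still has there
  choose y hy0 hyz hyrow using fun j => exists_le_sum_eq (hz0 j)
    (le_min (sum_nonneg fun k _ => hz0 j k) measureReal_nonneg) (min_le_left _ (μ₁'.real (Q j)))
  -- and remove from each cell of `μ₂` the flow into it that was dropped
  obtain ⟨μ₂', hle₂, hcell, hmass⟩ := exists_le_measureReal_cells_eq_sub hQm hQd (μ := μ₂)
    (m := fun k => ∑ j, z j k - ∑ j, y j k) (fun k => sub_nonneg.2 (sum_le_sum fun j _ => hyz j k))
    fun k => (sub_le_self _ (sum_nonneg fun j _ => hy0 j k)).trans (hzb k)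
  have : IsFiniteMeasure μ₂' := isFiniteMeasure_of_le μ₂ hle₂
  have e₁ := measureReal_univ_eq_sum_cells_add hQm hQd (μ := μ₁)
  have e₂ := measureReal_univ_eq_sum_cells_add hQm hQd (μ := μ₂)
  have hW₁ := measureReal_le_of_le hle (⋃ k, Q k)ᶜ
  have hW₂ := measureReal_le_of_le hle₂ (⋃ k, Q k)ᶜ
  have hμ₁ := le_max_left (μ₁.real univ) (μ₂.real univ)
  have hμ₂ := le_max_right (μ₁.real univ) (μ₂.real univ)
  have hZ : ∑ j, ∑ k, z j k = ∑ k, ∑ j, z j k := sum_comm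
  refine ⟨μ₂', hle₂, dPr_le_of_plan hQm hQd hQ hy0
    (fun j k h => hzr j k fun h0 => h (le_antisymm (h0 ▸ hyz j k) (hy0 j k)))
    (d := fun j => μ₁.real (Q j) - ∑ k, z j k) (e := fun k => μ₂.real (Q k) - ∑ j, z j k)
    (fun j => sub_nonneg.2 (hza j)) (fun k => sub_nonneg.2 (hzb k)) (fun j => ⟨?_, ?_⟩)
    (fun k => ⟨?_, ?_⟩) (by positivity) (by linarith) ?_ ?_, ?_⟩
  · exact (hyrow j).trans_le (min_le_right _ _)
  · rcases min_choice (∑ k, z j k) (μ₁'.real (Q j)) with h | h <;> rw [hyrow j, h] <;>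
      linarith [hza j, measureReal_le_of_le hle (Q j)]
  · rw [hcell k]; linarith [hzb k]
  · rw [hcell k]; linarith
  · rw [sum_sub_distrib]; linarith
  · rw [sum_sub_distrib]; linarith
  · calc μ₂.real univ - μ₂'.real univ = ∑ j, (∑ k, z j k - ∑ k, y j k) := by
          rw [hmass, sum_sub_distrib, sum_sub_distrib, hZ, sum_comm (f := y)]
      _ ≤ _ := by simpa only [hyrow] using sum_sub_min_le_measureReal_univ_sub hQm hQd hle hza

end CellPlans

end Measures

theorem rectangular_lemma_general {E : Type*} [MetricSpace E]
    [TopologicalSpace.SeparableSpace E] [MeasurableSpace E] [BorelSpace E]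
    (ε δ : ℝ)
    (μ₁ μ₂ μ₁' : Measure E) [IsFiniteMeasure μ₁] [IsFiniteMeasure μ₂] [IsFiniteMeasure μ₁']
    (hPr : dPr μ₁ μ₂ < δ) (hle : μ₁' ≤ μ₁) (hvar : varDist μ₁ μ₁' ≤ ENNReal.ofReal ε) :
    ∃ μ₂' : Measure E, IsFiniteMeasure μ₂' ∧ μ₂' ≤ μ₂ ∧ dPr μ₁' μ₂' < δ ∧
      varDist μ₂ μ₂' ≤ ENNReal.ofReal ε := by
  obtain ⟨η, hηδ, hη, hηPr⟩ := exists_forall_le_thickening_of_dPr_lt hPr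
  set s := (δ - η) / 4
  have hs : 0 < s := by simp only [s]; linarith
  obtain ⟨N, Q, hQm, hQd, hQ, hW⟩ := exists_cells_measureReal_compl_le (μ := μ₁ + μ₂) hs hs
  rw [measureReal_add_apply] at hW
  obtain ⟨μ₂', hle₂, hdPr, hmass⟩ := exists_le_dPr_le_of_cells hQm hQd hle hQ hs hη.le hηPr
    (by linarith [measureReal_nonneg (μ := μ₂) (s := (⋃ k, Q k)ᶜ)])
    (by linarith [measureReal_nonneg (μ := μ₁) (s := (⋃ k, Q k)ᶜ)])
  refine ⟨μ₂', isFiniteMeasure_of_le μ₂ hle₂, hle₂, hdPr.trans_lt (by simp only [s]; linarith), ?_⟩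
  rw [varDist_eq_ofReal_of_le hle] at hvar
  rw [varDist_eq_ofReal_of_le hle₂]
  exact (ENNReal.ofReal_le_ofReal hmass).trans hvar

/-- Rectangular lemma: if `dPr(μ₁,μ₂) < δ` and `μ₁' ≤ μ₁` with `‖μ₁ − μ₁'‖ ≤ ε`, then
there is `μ₂' ≤ μ₂` with `dPr(μ₁',μ₂') < δ` and `‖μ₂ − μ₂'‖ ≤ ε`. -/
theorem rectangular_lemma {E : Type*} [MetricSpace E] [CompleteSpace E]
    [TopologicalSpace.SeparableSpace E] [MeasurableSpace E] [BorelSpace E]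
    (ε δ : ℝ) (hε : 0 < ε) (hδ : 0 < δ)
    (μ₁ μ₂ μ₁' : Measure E) [IsFiniteMeasure μ₁] [IsFiniteMeasure μ₂] [IsFiniteMeasure μ₁']
    (hPr : dPr μ₁ μ₂ < δ) (hle : μ₁' ≤ μ₁) (hvar : varDist μ₁ μ₁' ≤ ENNReal.ofReal ε) :
    ∃ μ₂' : Measure E, IsFiniteMeasure μ₂' ∧ μ₂' ≤ μ₂ ∧ dPr μ₁' μ₂' < δ ∧
      varDist μ₂ μ₂' ≤ ENNReal.ofReal ε :=
  rectangular_lemma_general ε δ μ₁ μ₂ μ₁' hPr hle hvar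
end

section
/- Let (X,r) and (I,d) be complete separable metric spaces and μ a finite Borel measure on X×I with first marginal ν and disintegration kernel K. Then the following are equivalent: (a) β(μ) = 0; (b) K_x is a Dirac measure for ν-almost every x ∈ X; (c) μ admits a mark function. -/
/-!
The integrand `1 ∧ d(u,v)` vanishes exactly on the diagonal, so the inner double integral
vanishes iff `K_x ⊗ K_x` is carried by the diagonal, i.e. iff `K_x` is a Dirac mass. A kernel
that is a.e. Dirac agrees a.e. with the deterministic kernel `δ_{κ(x)}` of a measurable `κ`, and
`ν ⊗ δ_κ` is the pushforward of `ν` by the graph of `κ`; conversely, by uniqueness of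
disintegration, such a pushforward has disintegration kernel `δ_κ`.
-/

open MeasureTheory Filter Topology ENNReal

/-- `β(μ) = ∫_X ∫_I ∫_I (1 ∧ d(u,v)) K_x(du) K_x(dv) ν(dx)` where `ν` is the first
marginal of `μ` and `K` its disintegration (conditional) kernel. -/
noncomputable def beta {X I : Type*} [MeasurableSpace X]
    [MetricSpace I] [MeasurableSpace I] [StandardBorelSpace I] [Nonempty I]
    (μ : Measure (X × I)) [IsFiniteMeasure μ] : ℝ≥0∞ :=
  ∫⁻ x, ∫⁻ u, ∫⁻ v, ENNReal.ofReal (min 1 (dist u v)) ∂(μ.condKernel x) ∂(μ.condKernel x) ∂μ.fst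

/-- `κ` is a mark function for `μ`: it is measurable and `μ(dx,du) = ν(dx) δ_{κ(x)}(du)`,
i.e. `μ` is the pushforward of its first marginal under `x ↦ (x, κ x)`. -/
def IsMarkFunction {X I : Type*} [MeasurableSpace X] [MeasurableSpace I]
    (μ : Measure (X × I)) (κ : X → I) : Prop :=
  Measurable κ ∧ μ = μ.fst.map (fun x => (x, κ x))

section
open ProbabilityTheory
variable {X α : Type*} [MeasurableSpace X] [MeasurableSpace α]

lemma MeasureTheory.Measure.eq_dirac_of_ae_eq {P : Measure α} [IsProbabilityMeasure P] {a : α}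
    (h : ∀ᵐ b ∂P, b = a) : P = Measure.dirac a := by
  calc P = P.map id := Measure.map_id.symm
  _ = P.map (fun _ => a) := Measure.map_congr h
  _ = Measure.dirac a := by rw [Measure.map_const, measure_univ, one_smul]

lemma MeasureTheory.lintegral_lintegral_eq_zero_iff_eq_dirac [MeasurableSingletonClass α]
    {f : α → α → ℝ≥0∞} (hf : Measurable (Function.uncurry f)) (hf_zero : ∀ a b, f a b = 0 ↔ a = b)
    (P : Measure α) [IsProbabilityMeasure P] :
    ∫⁻ a, ∫⁻ b, f a b ∂P ∂P = 0 ↔ ∃ a, P = Measure.dirac a := by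
  constructor
  · intro h
    have h_inner : Measurable fun a => ∫⁻ b, f a b ∂P := hf.lintegral_prod_right'
    rw [lintegral_eq_zero_iff h_inner] at h
    have h_ae : ∀ᵐ a ∂P, ∀ᵐ b ∂P, b = a := by
      filter_upwards [h] with a ha
      rw [Pi.zero_apply, lintegral_eq_zero_iff hf.of_uncurry_left] at ha
      filter_upwards [ha] with b hb
      exact ((hf_zero a b).1 hb).symm
    obtain ⟨a, ha⟩ := h_ae.exists
    exact ⟨a, Measure.eq_dirac_of_ae_eq ha⟩
  · rintro ⟨a, rfl⟩
    simp [hf_zero]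

lemma Measurable.lintegral_lintegral_kernel {K : Kernel X α} [IsSFiniteKernel K]
    {f : α → α → ℝ≥0∞} (hf : Measurable (Function.uncurry f)) :
    Measurable fun x => ∫⁻ a, ∫⁻ b, f a b ∂K x ∂K x := by
  have h_prod : (fun x => ∫⁻ a, ∫⁻ b, f a b ∂K x ∂K x)
      = fun x => ∫⁻ p, Function.uncurry f p ∂(K ×ₖ K) x := by
    ext x
    rw [Kernel.prod_apply, lintegral_prod _ hf.aemeasurable]
    rfl
  rw [h_prod]
  exact hf.lintegral_kernel

/-- The atom is read off as `r (∫ e ∂K x)`, with `e` a Borel embedding into `ℝ` and `r` a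
measurable left inverse of `e`. -/
lemma ProbabilityTheory.Kernel.exists_measurable_ae_eq_dirac [StandardBorelSpace α] [Nonempty α]
    (K : Kernel X α) [IsSFiniteKernel K] {ν : Measure X} (h : ∀ᵐ x ∂ν, ∃ a, K x = Measure.dirac a) :
    ∃ κ : X → α, Measurable κ ∧ ∀ᵐ x ∂ν, K x = Measure.dirac (κ x) := by
  set e := embeddingReal α
  obtain ⟨r, hr, hre⟩ := (measurableEmbedding_embeddingReal α).exists_measurable_extend
    measurable_id (fun _ => inferInstance)
  have h_mean : Measurable fun x => ∫ a, e a ∂K x :=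
    ((measurable_embeddingReal α).comp measurable_snd).stronglyMeasurable
      |>.integral_kernel_prod_right'.measurable
  refine ⟨fun x => r (∫ a, e a ∂K x), hr.comp h_mean, ?_⟩
  filter_upwards [h] with x ⟨a, ha⟩
  rw [ha, integral_dirac]
  exact congrArg Measure.dirac (congrFun hre a).symm

lemma exists_isMarkFunction_iff_ae_condKernel_eq_dirac {X I : Type*} [MeasurableSpace X]
    [MeasurableSpace I] [StandardBorelSpace I] [Nonempty I]
    (μ : Measure (X × I)) [IsFiniteMeasure μ] :
    (∃ κ, IsMarkFunction μ κ) ↔ ∀ᵐ x ∂μ.fst, ∃ u, μ.condKernel x = Measure.dirac u := by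
  constructor
  · rintro ⟨κ, hκ, h_map⟩
    rw [← Measure.compProd_deterministic hκ] at h_map
    filter_upwards [eq_condKernel_of_measure_eq_compProd _ h_map] with x hx
    exact ⟨κ x, by rw [← hx, Kernel.deterministic_apply]⟩
  · intro h
    obtain ⟨κ, hκ, h_ae⟩ := μ.condKernel.exists_measurable_ae_eq_dirac h
    refine ⟨κ, hκ, ?_⟩
    calc μ = μ.fst ⊗ₘ μ.condKernel := μ.disintegrate μ.condKernel |>.symm
    _ = μ.fst ⊗ₘ Kernel.deterministic κ hκ := Measure.compProd_congr h_ae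
    _ = μ.fst.map (fun x => (x, κ x)) := Measure.compProd_deterministic hκ

end

theorem beta_zero_iff_markFunction_general {X I : Type*}
    [MeasurableSpace X]
    [MetricSpace I] [CompleteSpace I] [SecondCountableTopology I]
    [MeasurableSpace I] [BorelSpace I] [Nonempty I]
    (μ : Measure (X × I)) [IsFiniteMeasure μ] :
    (beta μ = 0 ↔ ∀ᵐ x ∂μ.fst, ∃ u : I, μ.condKernel x = Measure.dirac u) ∧
    (beta μ = 0 ↔ ∃ κ : X → I, IsMarkFunction μ κ) := by
  have hf : Measurable fun p : I × I => ENNReal.ofReal (min 1 (dist p.1 p.2)) :=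
    (measurable_const.min measurable_dist).ennreal_ofReal
  have hf_zero (u v : I) : ENNReal.ofReal (min 1 (dist u v)) = 0 ↔ u = v := by
    rw [ENNReal.ofReal_eq_zero, min_le_iff, dist_le_zero]
    simp
  have h_dirac : beta μ = 0 ↔ ∀ᵐ x ∂μ.fst, ∃ u : I, μ.condKernel x = Measure.dirac u := by
    rw [beta, lintegral_eq_zero_iff hf.lintegral_lintegral_kernel]
    exact eventually_congr <| .of_forall fun x =>
      lintegral_lintegral_eq_zero_iff_eq_dirac hf hf_zero (μ.condKernel x)
  exact ⟨h_dirac, h_dirac.trans (exists_isMarkFunction_iff_ae_condKernel_eq_dirac μ).symm⟩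

/-- For a finite Borel measure `μ` on `X × I` with first marginal `ν` and disintegration
kernel `K`, the following are equivalent: (a) `β(μ) = 0`; (b) `K_x` is a Dirac measure for
`ν`-a.e. `x`; (c) `μ` admits a mark function. -/
theorem beta_zero_iff_markFunction {X I : Type*}
    [MetricSpace X] [CompleteSpace X] [SecondCountableTopology X]
    [MeasurableSpace X] [BorelSpace X]
    [MetricSpace I] [CompleteSpace I] [SecondCountableTopology I]
    [MeasurableSpace I] [BorelSpace I] [Nonempty I]
    (μ : Measure (X × I)) [IsFiniteMeasure μ] :
    (beta μ = 0 ↔ ∀ᵐ x ∂μ.fst, ∃ u : I, μ.condKernel x = Measure.dirac u) ∧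
    (beta μ = 0 ↔ ∃ κ : X → I, IsMarkFunction μ κ) :=
  beta_zero_iff_markFunction_general μ
end

section
/- Let (X,r) and (I,d) be complete separable metric spaces and μ, μ' finite Borel measures on X×I. Then β(μ) ≤ β(μ') + 2‖μ − μ'‖. -/
open MeasureTheory Filter Topology ENNReal

/-!
For fixed `x`, write `P = K_x`, `P' = K'_x` for the two conditional laws and `f = 1 ∧ d`.
The function `g(u) = ∫ f(u,·) dP + ∫ f(u,·) dP' − ∫∫ f dP' dP` takes values in `[0, 2]`
(by the triangle inequality and `f ≤ 1`), and by symmetry of `f` it integrates to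
`∫∫ f dP dP` against `P` and to `∫∫ f dP' dP'` against `P'`. Hence, as a function of `(x, u)`,
`g` integrates to `β(μ)` against `μ` and to `β(μ')` against `μ'`, and the layer cake formula
bounds the difference of the integrals of a `[0, 2]`-valued function by `2 ‖μ − μ'‖`.
-/

open Set ProbabilityTheory Function
open scoped NNReal

section VarDist

variable {E : Type*} [MeasurableSpace E]

lemma measure_le_add_varDist (μ ν : Measure E) {B : Set E} (hB : MeasurableSet B) :
    μ B ≤ ν B + varDist μ ν :=
  tsub_le_iff_left.1 (le_iSup₂_of_le B hB (le_max_left _ _))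

lemma lintegral_le_lintegral_add_mul_varDist (μ ν : Measure E) {g : E → ℝ≥0∞}
    (hg : Measurable g) {C : ℝ≥0} (hgC : ∀ p, g p ≤ C) :
    ∫⁻ p, g p ∂μ ≤ ∫⁻ p, g p ∂ν + C * varDist μ ν := by
  set f : E → ℝ := fun p => (g p).toReal
  have hfm : Measurable f := hg.ennreal_toReal
  have layercake (ρ : Measure E) : ∫⁻ p, g p ∂ρ = ∫⁻ t in Ioi 0, ρ {p | t < f p} := by
    rw [← lintegral_eq_lintegral_meas_lt ρ (ae_of_all _ fun _ => toReal_nonneg) hfm.aemeasurable]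
    exact lintegral_congr fun p => (ofReal_toReal (ne_top_of_le_ne_top coe_ne_top (hgC p))).symm
  have tail (t : ℝ) :
      μ {p | t < f p} ≤ ν {p | t < f p} + (Iic (C : ℝ)).indicator (fun _ => varDist μ ν) t := by
    by_cases ht : t ≤ C
    · rw [indicator_of_mem (mem_Iic.2 ht)]
      exact measure_le_add_varDist μ ν (measurableSet_lt measurable_const hfm)
    · have hempty : {p | t < f p} = ∅ :=
        eq_empty_of_forall_notMem fun p hp => ht (hp.le.trans (toReal_le_coe_of_le_coe (hgC p)))
      simp [hempty]
  rw [layercake μ, layercake ν]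
  calc ∫⁻ t in Ioi 0, μ {p | t < f p}
      ≤ ∫⁻ t in Ioi 0, (ν {p | t < f p} + (Iic (C : ℝ)).indicator (fun _ => varDist μ ν) t) :=
        lintegral_mono tail
    _ = (∫⁻ t in Ioi 0, ν {p | t < f p}) + varDist μ ν * volume (Iic (C : ℝ) ∩ Ioi 0) := by
        rw [lintegral_add_right _ (measurable_const.indicator measurableSet_Iic),
          lintegral_indicator_const measurableSet_Iic, Measure.restrict_apply measurableSet_Iic]
    _ = (∫⁻ t in Ioi 0, ν {p | t < f p}) + C * varDist μ ν := by
        rw [Iic_inter_Ioi, Real.volume_Ioc, sub_zero, ofReal_coe_nnreal, mul_comm]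

end VarDist

section Potential

variable {I : Type*} [MeasurableSpace I] {f : I → I → ℝ≥0∞}

noncomputable def potential (f : I → I → ℝ≥0∞) (P : Measure I) (u : I) : ℝ≥0∞ :=
  ∫⁻ v, f u v ∂P

noncomputable def crossLIntegral (f : I → I → ℝ≥0∞) (P Q : Measure I) : ℝ≥0∞ :=
  ∫⁻ u, potential f Q u ∂P

noncomputable def balancedPotential (f : I → I → ℝ≥0∞) (P Q : Measure I) (u : I) : ℝ≥0∞ :=
  potential f P u + potential f Q u - crossLIntegral f P Q

lemma measurable_potential (hf : Measurable (uncurry f)) (P : Measure I) [SFinite P] :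
    Measurable (potential f P) :=
  hf.lintegral_prod_right'

lemma potential_le_one (hf1 : ∀ u v, f u v ≤ 1) (P : Measure I) [IsProbabilityMeasure P]
    (u : I) : potential f P u ≤ 1 :=
  (lintegral_mono (hf1 u)).trans_eq (by simp)

lemma crossLIntegral_le_one (hf1 : ∀ u v, f u v ≤ 1) (P Q : Measure I)
    [IsProbabilityMeasure P] [IsProbabilityMeasure Q] : crossLIntegral f P Q ≤ 1 :=
  (lintegral_mono (potential_le_one hf1 Q)).trans_eq (by simp)

lemma crossLIntegral_comm (hf : Measurable (uncurry f)) (hsymm : ∀ u v, f u v = f v u)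
    (P Q : Measure I) [SFinite P] [SFinite Q] :
    crossLIntegral f P Q = crossLIntegral f Q P := by
  unfold crossLIntegral potential
  rw [lintegral_lintegral_swap hf.aemeasurable]
  exact lintegral_congr fun v => lintegral_congr fun u => hsymm u v

lemma crossLIntegral_le_potential_add (hsymm : ∀ u v, f u v = f v u)
    (htri : ∀ u w v, f u v ≤ f u w + f w v) (P Q : Measure I)
    [IsProbabilityMeasure P] [IsProbabilityMeasure Q] (u : I) :
    crossLIntegral f P Q ≤ potential f P u + potential f Q u := by
  calc crossLIntegral f P Q ≤ ∫⁻ w, ∫⁻ v, (f u w + f u v) ∂Q ∂P :=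
        lintegral_mono fun w => lintegral_mono fun v => hsymm u w ▸ htri w u v
    _ = potential f P u + potential f Q u := by
        simp [lintegral_add_left measurable_const, lintegral_add_right _ measurable_const,
          potential]

lemma balancedPotential_comm (hf : Measurable (uncurry f)) (hsymm : ∀ u v, f u v = f v u)
    (P Q : Measure I) [SFinite P] [SFinite Q] :
    balancedPotential f P Q = balancedPotential f Q P := by
  funext u
  simp only [balancedPotential]
  rw [add_comm, crossLIntegral_comm hf hsymm]

lemma balancedPotential_le_two (hf1 : ∀ u v, f u v ≤ 1) (P Q : Measure I)
    [IsProbabilityMeasure P] [IsProbabilityMeasure Q] (u : I) :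
    balancedPotential f P Q u ≤ 2 :=
  tsub_le_self.trans <| (add_le_add (potential_le_one hf1 P u) (potential_le_one hf1 Q u)).trans
    one_add_one_eq_two.le

lemma lintegral_balancedPotential (hf : Measurable (uncurry f)) (hsymm : ∀ u v, f u v = f v u)
    (htri : ∀ u w v, f u v ≤ f u w + f w v) (hf1 : ∀ u v, f u v ≤ 1) (P Q : Measure I)
    [IsProbabilityMeasure P] [IsProbabilityMeasure Q] :
    ∫⁻ u, balancedPotential f P Q u ∂P = crossLIntegral f P P := by
  have hfin : crossLIntegral f P Q ≠ ∞ :=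
    ne_top_of_le_ne_top one_ne_top (crossLIntegral_le_one hf1 P Q)
  unfold balancedPotential
  rw [lintegral_sub measurable_const (by simpa using hfin)
      (ae_of_all _ (crossLIntegral_le_potential_add hsymm htri P Q)),
    lintegral_add_left (measurable_potential hf P), lintegral_const, measure_univ, mul_one]
  exact ENNReal.add_sub_cancel_right hfin

end Potential

section Kernel

variable {X I : Type*} [MeasurableSpace X] [MeasurableSpace I] {f : I → I → ℝ≥0∞}

lemma measurable_balancedPotential_kernel (hf : Measurable (uncurry f)) (κ η : Kernel X I)
    [IsSFiniteKernel κ] [IsSFiniteKernel η] :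
    Measurable fun p : X × I => balancedPotential f (κ p.1) (η p.1) p.2 := by
  have hpot (ζ : Kernel X I) [IsSFiniteKernel ζ] :
      Measurable fun p : X × I => potential f (ζ p.1) p.2 :=
    Measurable.lintegral_kernel_prod_right (κ := ζ.prodMkRight I)
      (hf.comp (measurable_fst.snd.prodMk measurable_snd))
  have hcross : Measurable fun x => crossLIntegral f (κ x) (η x) :=
    (hpot η).lintegral_kernel_prod_right'
  exact ((hpot κ).add (hpot η)).sub (hcross.comp measurable_fst)

lemma lintegral_balancedPotential_condKernel [StandardBorelSpace I] [Nonempty I]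
    (hf : Measurable (uncurry f)) (hsymm : ∀ u v, f u v = f v u)
    (htri : ∀ u w v, f u v ≤ f u w + f w v) (hf1 : ∀ u v, f u v ≤ 1)
    (ρ : Measure (X × I)) [IsFiniteMeasure ρ] (η : Kernel X I) [IsMarkovKernel η] :
    ∫⁻ p, balancedPotential f (ρ.condKernel p.1) (η p.1) p.2 ∂ρ =
      ∫⁻ x, crossLIntegral f (ρ.condKernel x) (ρ.condKernel x) ∂ρ.fst := by
  rw [← Measure.lintegral_condKernel (measurable_balancedPotential_kernel hf _ _)]
  exact lintegral_congr fun x =>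
    lintegral_balancedPotential hf hsymm htri hf1 (ρ.condKernel x) (η x)

end Kernel

section TruncDist

variable {I : Type*} [MetricSpace I]

noncomputable def truncDist (u v : I) : ℝ≥0∞ := ENNReal.ofReal (min 1 (dist u v))

lemma truncDist_comm (u v : I) : truncDist u v = truncDist v u := by
  rw [truncDist, truncDist, dist_comm]

lemma truncDist_le_one (u v : I) : truncDist u v ≤ 1 :=
  ofReal_le_one.2 (min_le_left _ _)

lemma truncDist_triangle (u w v : I) : truncDist u v ≤ truncDist u w + truncDist w v := by
  rw [truncDist, truncDist, truncDist,
    ← ofReal_add (le_min zero_le_one dist_nonneg) (le_min zero_le_one dist_nonneg)]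
  refine ofReal_le_ofReal ?_
  simp only [min_def]
  split_ifs <;>
    linarith [dist_triangle u w v, dist_nonneg (x := u) (y := w), dist_nonneg (x := w) (y := v)]

lemma measurable_truncDist [MeasurableSpace I] [BorelSpace I] [SecondCountableTopology I] :
    Measurable (uncurry (truncDist (I := I))) :=
  measurable_ofReal.comp (measurable_const.min measurable_dist)

lemma beta_eq_lintegral_crossLIntegral {X : Type*} [MeasurableSpace X] [MeasurableSpace I]
    [StandardBorelSpace I] [Nonempty I] (ρ : Measure (X × I)) [IsFiniteMeasure ρ] :
    beta ρ = ∫⁻ x, crossLIntegral truncDist (ρ.condKernel x) (ρ.condKernel x) ∂ρ.fst :=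
  rfl

end TruncDist

theorem beta_le_beta_add_varDist_general {X I : Type*}
    [MeasurableSpace X]
    [MetricSpace I] [CompleteSpace I] [SecondCountableTopology I]
    [MeasurableSpace I] [BorelSpace I] [Nonempty I]
    (μ μ' : Measure (X × I)) [IsFiniteMeasure μ] [IsFiniteMeasure μ'] :
    beta μ ≤ beta μ' + 2 * varDist μ μ' := by
  have hf := measurable_truncDist (I := I)
  set G : X × I → ℝ≥0∞ := fun p =>
    balancedPotential truncDist (μ.condKernel p.1) (μ'.condKernel p.1) p.2
  have hG_μ : ∫⁻ p, G p ∂μ = beta μ :=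
    (lintegral_balancedPotential_condKernel hf truncDist_comm truncDist_triangle
      truncDist_le_one μ μ'.condKernel).trans (beta_eq_lintegral_crossLIntegral μ).symm
  have hG_μ' : ∫⁻ p, G p ∂μ' = beta μ' := by
    have hG_comm : G = fun p =>
        balancedPotential truncDist (μ'.condKernel p.1) (μ.condKernel p.1) p.2 :=
      funext fun p => congrFun (balancedPotential_comm hf truncDist_comm _ _) p.2
    rw [hG_comm, beta_eq_lintegral_crossLIntegral]
    exact lintegral_balancedPotential_condKernel hf truncDist_comm truncDist_triangle
      truncDist_le_one μ' μ.condKernel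
  have hG_le : ∀ p, G p ≤ (2 : ℝ≥0) := fun p => by
    simpa using balancedPotential_le_two truncDist_le_one _ _ p.2
  calc beta μ = ∫⁻ p, G p ∂μ := hG_μ.symm
    _ ≤ ∫⁻ p, G p ∂μ' + (2 : ℝ≥0) * varDist μ μ' :=
      lintegral_le_lintegral_add_mul_varDist μ μ'
        (measurable_balancedPotential_kernel hf _ _) hG_le
    _ = beta μ' + 2 * varDist μ μ' := by rw [hG_μ', coe_ofNat]

/-- `β(μ) ≤ β(μ') + 2‖μ − μ'‖` for finite Borel measures `μ, μ'` on `X × I`. -/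
theorem beta_le_beta_add_varDist {X I : Type*}
    [MetricSpace X] [CompleteSpace X] [SecondCountableTopology X]
    [MeasurableSpace X] [BorelSpace X]
    [MetricSpace I] [CompleteSpace I] [SecondCountableTopology I]
    [MeasurableSpace I] [BorelSpace I] [Nonempty I]
    (μ μ' : Measure (X × I)) [IsFiniteMeasure μ] [IsFiniteMeasure μ'] :
    beta μ ≤ beta μ' + 2 * varDist μ μ' :=
  beta_le_beta_add_varDist_general μ μ'
end

section
/- Let (X,r) and (I,d) be complete separable metric spaces, δ, ε > 0, and μ a finite Borel measure on X×I such that (μ⊗μ)((X×I)² ∖ A^X_{2δ,ε}) = 0. Then β(μ) ≤ ε · μ(X×I). -/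
open MeasureTheory Filter Topology ENNReal

/-- The set `A^X_{δ,ε} = {((x₁,u₁),(x₂,u₂)) | r(x₁,x₂) ≥ δ or d(u₁,u₂) ≤ ε}`. -/
def Aset {X I : Type*} [PseudoMetricSpace X] [PseudoMetricSpace I] (δ : ℝ) (ε : ℝ≥0∞) :
    Set ((X × I) × (X × I)) :=
  {p | δ ≤ dist p.1.1 p.2.1 ∨ ENNReal.ofReal (dist p.1.2 p.2.2) ≤ ε}

/-!
Cover `X` by countably many balls `B` of radius `δ` and the open set `{d(u, v) > ε}` by
countably many open rectangles `S × T`. Two points of `B` are less than `2δ` apart, so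
`(B × S) × (B × T)` misses `A^X_{2δ,ε}` and hence `μ(B × S) · μ(B × T) = 0`. Disintegrating,
`K_x S · K_x T = 0` for a.e. `x ∈ B`, so for a.e. `x` the measure `K_x ⊗ K_x` does not charge
`{d(u, v) > ε}`, and the inner double integral of `β` is at most `ε`.
-/

open ProbabilityTheory Set TopologicalSpace

lemma IsOpen.exists_countable_prod_cover {α β : Type*}
    [TopologicalSpace α] [TopologicalSpace β]
    [SecondCountableTopology α] [SecondCountableTopology β] {U : Set (α × β)} (hU : IsOpen U) :
    ∃ R : Set (Set α × Set β), R.Countable ∧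
      (∀ p ∈ R, IsOpen p.1 ∧ IsOpen p.2 ∧ p.1 ×ˢ p.2 ⊆ U) ∧ U ⊆ ⋃ p ∈ R, p.1 ×ˢ p.2 := by
  refine ⟨{p | p ∈ countableBasis α ×ˢ countableBasis β ∧ p.1 ×ˢ p.2 ⊆ U},
    ((countable_countableBasis α).prod (countable_countableBasis β)).mono (sep_subset _ _),
    fun p hp => ⟨isOpen_of_mem_countableBasis hp.1.1, isOpen_of_mem_countableBasis hp.1.2,
      hp.2⟩, ?_⟩
  rintro ⟨a, b⟩ hab
  obtain ⟨u, v, hu, hv, hau, hbv, huv⟩ := isOpen_prod_iff.mp hU a b hab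
  obtain ⟨s, hs, has, hsu⟩ := (isBasis_countableBasis α).exists_subset_of_mem_open hau hu
  obtain ⟨t, ht, hbt, htv⟩ := (isBasis_countableBasis β).exists_subset_of_mem_open hbv hv
  exact mem_biUnion (x := (s, t)) ⟨⟨hs, ht⟩, (prod_mono hsu htv).trans huv⟩ ⟨has, hbt⟩

lemma Measure.eq_zero_or_eq_zero_of_prod_subset_null {α β : Type*} [MeasurableSpace α]
    [MeasurableSpace β] (μ : Measure α) (ν : Measure β) [SFinite ν] {N : Set (α × β)}
    {s : Set α} {t : Set β} (hN : μ.prod ν N = 0) (hst : s ×ˢ t ⊆ N) :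
    μ s = 0 ∨ ν t = 0 :=
  mul_eq_zero.mp (Measure.prod_prod (μ := μ) (ν := ν) s t ▸ measure_mono_null hst hN)

lemma ball_prod_prod_ball_prod_subset_compl_Aset {X I : Type*} [PseudoMetricSpace X]
    [PseudoMetricSpace I] (x₀ : X) (δ : ℝ) {ε : ℝ≥0∞} {S T : Set I}
    (hST : S ×ˢ T ⊆ {p | ε < ENNReal.ofReal (dist p.1 p.2)}) :
    (Metric.ball x₀ δ ×ˢ S) ×ˢ (Metric.ball x₀ δ ×ˢ T) ⊆ (Aset (2 * δ) ε)ᶜ := by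
  rintro ⟨⟨x₁, u₁⟩, x₂, u₂⟩ ⟨⟨hx₁, hu₁⟩, hx₂, hu₂⟩
  simp only [Aset, mem_compl_iff, mem_ofPred_eq, not_or, not_le]
  refine ⟨?_, hST (mk_mem_prod hu₁ hu₂)⟩
  calc dist x₁ x₂ ≤ dist x₁ x₀ + dist x₀ x₂ := dist_triangle _ _ _
    _ < δ + δ := add_lt_add hx₁ (Metric.mem_ball'.mp hx₂)
    _ = 2 * δ := by ring

section condKernel

variable {X I : Type*} [MeasurableSpace X] [MeasurableSpace I] [StandardBorelSpace I]
  [Nonempty I]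
  (μ : Measure (X × I)) [IsFiniteMeasure μ]

lemma ae_condKernel_eq_zero_of_prod_null {B : Set X} {S : Set I} (hB : MeasurableSet B)
    (hS : MeasurableSet S) (h : μ (B ×ˢ S) = 0) :
    ∀ᵐ x ∂μ.fst, x ∈ B → μ.condKernel x S = 0 := by
  rw [← μ.disintegrate μ.condKernel, Measure.compProd_apply_prod hB hS] at h
  exact (setLIntegral_eq_zero_iff hB (Kernel.measurable_coe _ hS)).mp h

lemma ae_condKernel_prod_condKernel_eq_zero {B : Set X} {S T : Set I} (hB : MeasurableSet B)
    (hS : MeasurableSet S) (hT : MeasurableSet T) (h : μ (B ×ˢ S) = 0 ∨ μ (B ×ˢ T) = 0) :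
    ∀ᵐ x ∂μ.fst, x ∈ B → (μ.condKernel x).prod (μ.condKernel x) (S ×ˢ T) = 0 := by
  rcases h with h | h
  · filter_upwards [ae_condKernel_eq_zero_of_prod_null μ hB hS h] with x hx hxB
    rw [Measure.prod_prod, hx hxB, zero_mul]
  · filter_upwards [ae_condKernel_eq_zero_of_prod_null μ hB hT h] with x hx hxB
    rw [Measure.prod_prod, hx hxB, mul_zero]

end condKernel

theorem ae_condKernel_prod_condKernel_dist_null {X I : Type*} [PseudoMetricSpace X]
    [SecondCountableTopology X] [MeasurableSpace X] [OpensMeasurableSpace X]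
    [MetricSpace I] [SecondCountableTopology I] [MeasurableSpace I] [OpensMeasurableSpace I]
    [StandardBorelSpace I] [Nonempty I] (μ : Measure (X × I)) [IsFiniteMeasure μ]
    {δ : ℝ} (hδ : 0 < δ) {ε : ℝ≥0∞} (hsupp : (μ.prod μ) (Aset (2 * δ) ε)ᶜ = 0) :
    ∀ᵐ x ∂μ.fst, (μ.condKernel x).prod (μ.condKernel x)
      {p | ε < ENNReal.ofReal (dist p.1 p.2)} = 0 := by
  have hU : IsOpen {p : I × I | ε < ENNReal.ofReal (dist p.1 p.2)} :=
    isOpen_lt continuous_const (ENNReal.continuous_ofReal.comp continuous_dist)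
  obtain ⟨R, hR, hRopen, hUR⟩ := hU.exists_countable_prod_cover
  obtain ⟨T, hT, hTcover⟩ :=
    isOpen_iUnion_countable (fun x : X => Metric.ball x δ) fun _ => Metric.isOpen_ball
  have hrect : ∀ x₀ ∈ T, ∀ p ∈ R, ∀ᵐ x ∂μ.fst,
      x ∈ Metric.ball x₀ δ → (μ.condKernel x).prod (μ.condKernel x) (p.1 ×ˢ p.2) = 0 :=
    fun x₀ _ p hp =>
      ae_condKernel_prod_condKernel_eq_zero μ Metric.isOpen_ball.measurableSet
        (hRopen p hp).1.measurableSet (hRopen p hp).2.1.measurableSet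
        (Measure.eq_zero_or_eq_zero_of_prod_subset_null μ μ hsupp
          (ball_prod_prod_ball_prod_subset_compl_Aset x₀ δ (hRopen p hp).2.2))
  filter_upwards [(ae_ball_iff hT).2 fun x₀ hx₀ => (ae_ball_iff hR).2 (hrect x₀ hx₀)]
    with x hx
  have hxcover : x ∈ ⋃ x₀, Metric.ball x₀ δ :=
    mem_iUnion.2 ⟨x, Metric.mem_ball_self hδ⟩
  rw [← hTcover] at hxcover
  obtain ⟨x₀, hx₀T, hxx₀⟩ := mem_iUnion₂.1 hxcover
  exact measure_mono_null hUR
    ((measure_biUnion_null_iff hR).2 fun p hp => hx x₀ hx₀T p hp hxx₀)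

lemma lintegral_lintegral_min_one_dist_le {I : Type*} [PseudoMetricSpace I]
    [SecondCountableTopology I] [MeasurableSpace I] [OpensMeasurableSpace I]
    {κ : Measure I} [IsProbabilityMeasure κ] {ε : ℝ≥0∞}
    (h : κ.prod κ {p | ε < ENNReal.ofReal (dist p.1 p.2)} = 0) :
    ∫⁻ u, ∫⁻ v, ENNReal.ofReal (min 1 (dist u v)) ∂κ ∂κ ≤ ε := by
  have hf : Measurable fun p : I × I => ENNReal.ofReal (min 1 (dist p.1 p.2)) :=
    (measurable_const.min measurable_dist).ennreal_ofReal
  have hle : ∀ᵐ p ∂κ.prod κ, ENNReal.ofReal (min 1 (dist p.1 p.2)) ≤ ε := by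
    refine ae_iff.2 (measure_mono_null (fun p hp => ?_) h)
    simp only [mem_ofPred_eq, not_le] at hp ⊢
    exact hp.trans_le (ENNReal.ofReal_le_ofReal (min_le_right _ _))
  calc ∫⁻ u, ∫⁻ v, ENNReal.ofReal (min 1 (dist u v)) ∂κ ∂κ
      = ∫⁻ p, ENNReal.ofReal (min 1 (dist p.1 p.2)) ∂κ.prod κ :=
        (lintegral_prod _ hf.aemeasurable).symm
    _ ≤ ∫⁻ _, ε ∂κ.prod κ := lintegral_mono_ae hle
    _ = ε := by simp

theorem beta_le_of_prod_supported_general {X I : Type*}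
    [MetricSpace X] [SecondCountableTopology X]
    [MeasurableSpace X] [BorelSpace X]
    [MetricSpace I] [CompleteSpace I] [SecondCountableTopology I]
    [MeasurableSpace I] [BorelSpace I] [Nonempty I]
    (δ ε : ℝ) (hδ : 0 < δ)
    (μ : Measure (X × I)) [IsFiniteMeasure μ]
    (hsupp : (μ.prod μ) (Aset (2 * δ) (ENNReal.ofReal ε))ᶜ = 0) :
    beta μ ≤ ENNReal.ofReal ε * μ Set.univ := by
  calc beta μ ≤ ∫⁻ _, ENNReal.ofReal ε ∂μ.fst :=
        lintegral_mono_ae <| (ae_condKernel_prod_condKernel_dist_null μ hδ hsupp).mono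
          fun _ hx => lintegral_lintegral_min_one_dist_le hx
    _ = ENNReal.ofReal ε * μ Set.univ := by rw [lintegral_const, Measure.fst_univ]

/-- If `μ ⊗ μ` is supported on `A^X_{2δ,ε}`, then `β(μ) ≤ ε · μ(X×I)`. -/
theorem beta_le_of_prod_supported {X I : Type*}
    [MetricSpace X] [CompleteSpace X] [SecondCountableTopology X]
    [MeasurableSpace X] [BorelSpace X]
    [MetricSpace I] [CompleteSpace I] [SecondCountableTopology I]
    [MeasurableSpace I] [BorelSpace I] [Nonempty I]
    (δ ε : ℝ) (hδ : 0 < δ) (hε : 0 < ε)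
    (μ : Measure (X × I)) [IsFiniteMeasure μ]
    (hsupp : (μ.prod μ) (Aset (2 * δ) (ENNReal.ofReal ε))ᶜ = 0) :
    beta μ ≤ ENNReal.ofReal ε * μ Set.univ :=
  beta_le_of_prod_supported_general δ ε hδ μ hsupp
end

section
/- Let (X,r) and (I,d) be complete separable metric spaces, δ, ε > 0, and μ a finite Borel measure on X×I with μ ∈ M^X_{2δ,ε}. Then β(μ) ≤ ε·(μ(X×I) + 2). -/
open MeasureTheory Filter Topology ENNReal

/-- `μ ∈ M^X_{δ,ε}`: there is a finite measure `μ' ≤ μ` with `‖μ − μ'‖ ≤ ε` such that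
`μ' ⊗ μ'` is supported on `A^X_{δ,ε}`. -/
def memM {X I : Type*} [PseudoMetricSpace X] [PseudoMetricSpace I]
    [MeasurableSpace X] [MeasurableSpace I]
    (μ : Measure (X × I)) (δ : ℝ) (ε : ℝ≥0∞) : Prop :=
  ∃ μ' : Measure (X × I), IsFiniteMeasure μ' ∧ μ' ≤ μ ∧ varDist μ μ' ≤ ε ∧
    (μ'.prod μ') (Aset δ ε)ᶜ = 0

/-!
Cover `X` by countably many balls `B_c` of radius `δ`. Two points of `B_c` are `2δ`-close, so the
image `λ_c` of `μ'` restricted to `B_c × I` under the projection to `I` gives no mass to pairs at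
distance `> ε`; hence the support `S_c` of `λ_c` has diameter `≤ ε`. The set
`T = ⋃ B_c × S_cᶜ` is `μ'`-null, so `μ T ≤ ‖μ - μ'‖ ≤ ε`, while every slice of `Tᶜ` over a point
of `X` has diameter `≤ ε`. Bounding `1 ∧ d(u,v)` by `ε` when `(x,u), (x,v) ∉ T` and by `1`
otherwise gives `β(μ) ≤ ε μ(X × I) + 2 μ T`.
-/

namespace MeasureTheory.Measure

variable {I : Type*} [PseudoEMetricSpace I] [MeasurableSpace I]

theorem ediam_support_le_of_prod_null (m : Measure I) [SFinite m]
    {e : ℝ≥0∞} (h : (m.prod m) {p | e < edist p.1 p.2} = 0) : Metric.ediam m.support ≤ e := by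
  refine Metric.ediam_le fun u hu v hv => not_lt.1 fun huv => ?_
  have hopen : IsOpen {p : I × I | e < edist p.1 p.2} := isOpen_lt continuous_const continuous_edist
  obtain ⟨U, hU, V, hV, hUV⟩ := mem_nhds_prod_iff.1 (hopen.mem_nhds (show (u, v) ∈ _ from huv))
  have hpos : 0 < (m.prod m) (U ×ˢ V) := by
    rw [prod_prod]
    exact ENNReal.mul_pos ((mem_support_iff_forall u).1 hu U hU).ne'
      ((mem_support_iff_forall v).1 hv V hV).ne'
  exact hpos.ne' (measure_mono_null hUV h)

end MeasureTheory.Measure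

section Fibers

variable {X I : Type*} [PseudoMetricSpace X] [PseudoMetricSpace I]
  [MeasurableSpace X] [MeasurableSpace I]

theorem exists_ediam_le_of_prod_compl_Aset_null [OpensMeasurableSpace I]
    [SecondCountableTopology I] (m : Measure (X × I)) [SFinite m] {δ : ℝ} {e : ℝ≥0∞}
    (hm : (m.prod m) (Aset δ e)ᶜ = 0) {B : Set X} (hB : ∀ x ∈ B, ∀ y ∈ B, dist x y < δ) :
    ∃ S : Set I, MeasurableSet S ∧ m (B ×ˢ Sᶜ) = 0 ∧ Metric.ediam S ≤ e := by
  set m₂ : Measure I := (m.restrict (B ×ˢ Set.univ)).map Prod.snd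
  have hm₂ : (m₂.prod m₂) {p | e < edist p.1 p.2} = 0 := by
    have hD : MeasurableSet {p : I × I | e < edist p.1 p.2} :=
      (isOpen_lt continuous_const continuous_edist).measurableSet
    rw [Measure.map_prod_map _ _ measurable_snd measurable_snd, Measure.prod_restrict,
      Measure.map_apply (measurable_snd.prodMap measurable_snd) hD,
      Measure.restrict_apply ((measurable_snd.prodMap measurable_snd) hD)]
    refine measure_mono_null ?_ hm
    rintro ⟨⟨x, u⟩, ⟨y, v⟩⟩ ⟨huv, ⟨hx, -⟩, ⟨hy, -⟩⟩ (hδ | he)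
    · exact (hB x hx y hy).not_ge hδ
    · exact huv.not_ge (edist_dist u v ▸ he)
  refine ⟨m₂.support, Measure.isClosed_support.measurableSet, ?_,
    Measure.ediam_support_le_of_prod_null m₂ hm₂⟩
  have := Measure.measure_compl_support (μ := m₂)
  rw [Measure.map_apply measurable_snd Measure.isOpen_compl_support.measurableSet,
    Measure.restrict_apply (measurable_snd Measure.isOpen_compl_support.measurableSet)] at this
  convert this using 2
  ext ⟨x, u⟩
  simp [and_comm]

theorem exists_null_forall_ediam_slice_compl_le [OpensMeasurableSpace X]
    [TopologicalSpace.SeparableSpace X] [OpensMeasurableSpace I] [SecondCountableTopology I]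
    (m : Measure (X × I)) [SFinite m]
    {δ : ℝ} (hδ : 0 < δ) {e : ℝ≥0∞} (hm : (m.prod m) (Aset (2 * δ) e)ᶜ = 0) :
    ∃ T : Set (X × I), MeasurableSet T ∧ m T = 0 ∧
      ∀ x, Metric.ediam (Prod.mk x ⁻¹' T)ᶜ ≤ e := by
  have hball (c : X) : ∀ x ∈ Metric.ball c δ, ∀ y ∈ Metric.ball c δ, dist x y < 2 * δ := by
    intro x hx y hy
    linarith [dist_triangle_right x y c, Metric.mem_ball.1 hx, Metric.mem_ball.1 hy]
  choose S hSm hS0 hSe using fun c => exists_ediam_le_of_prod_compl_Aset_null m hm (hball c)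
  obtain ⟨C, hCc, hCd⟩ := TopologicalSpace.exists_countable_dense X
  refine ⟨⋃ c ∈ C, Metric.ball c δ ×ˢ (S c)ᶜ, ?_, (measure_biUnion_null_iff hCc).2 fun c _ => hS0 c,
    fun x => ?_⟩
  · exact .biUnion hCc fun c _ => measurableSet_ball.prod (hSm c).compl
  · obtain ⟨c, hcC, hxc⟩ := hCd.exists_dist_lt x hδ
    refine (Metric.ediam_mono fun u hu => ?_).trans (hSe c)
    by_contra hu'
    exact hu (Set.mem_biUnion hcC ⟨Metric.mem_ball.2 hxc, hu'⟩)

end Fibers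

theorem lintegral_lintegral_ofReal_min_one_dist_le {I : Type*} [PseudoMetricSpace I]
    [MeasurableSpace I] (K : Measure I) [IsProbabilityMeasure K] {N : Set I}
    (hN : MeasurableSet N) {e : ℝ≥0∞} (he : Metric.ediam Nᶜ ≤ e) :
    ∫⁻ u, ∫⁻ v, ENNReal.ofReal (min 1 (dist u v)) ∂K ∂K ≤ e + 2 * K N := by
  have hpt (u v : I) :
      ENNReal.ofReal (min 1 (dist u v)) ≤ e + N.indicator 1 u + N.indicator 1 v := by
    have hle_one : ENNReal.ofReal (min 1 (dist u v)) ≤ 1 :=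
      ENNReal.ofReal_le_one.2 (min_le_left _ _)
    by_cases hu : u ∈ N
    · simpa [hu] using hle_one.trans (le_add_self.trans le_self_add)
    by_cases hv : v ∈ N
    · exact hle_one.trans (by simp [hv])
    calc ENNReal.ofReal (min 1 (dist u v)) ≤ edist u v := by
          rw [edist_dist]; exact ENNReal.ofReal_le_ofReal (min_le_right _ _)
      _ ≤ e := (Metric.edist_le_ediam_of_mem hu hv).trans he
      _ ≤ _ := le_self_add.trans le_self_add
  have hind : Measurable (N.indicator (1 : I → ℝ≥0∞)) := measurable_one.indicator hN
  calc ∫⁻ u, ∫⁻ v, ENNReal.ofReal (min 1 (dist u v)) ∂K ∂K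
      ≤ ∫⁻ u, ∫⁻ v, (e + N.indicator 1 u + N.indicator 1 v) ∂K ∂K :=
        lintegral_mono fun u => lintegral_mono (hpt u)
    _ = e + 2 * K N := by
        simp only [lintegral_add_right _ hind, lintegral_add_right _ measurable_const,
          lintegral_const, lintegral_indicator_one hN, measure_univ, mul_one]
        ring

theorem beta_le_of_memM_general {X I : Type*}
    [MetricSpace X] [SecondCountableTopology X]
    [MeasurableSpace X] [BorelSpace X]
    [MetricSpace I] [CompleteSpace I] [SecondCountableTopology I]
    [MeasurableSpace I] [BorelSpace I] [Nonempty I]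
    (δ ε : ℝ) (hδ : 0 < δ)
    (μ : Measure (X × I)) [IsFiniteMeasure μ]
    (hM : memM μ (2 * δ) (ENNReal.ofReal ε)) :
    beta μ ≤ ENNReal.ofReal ε * (μ Set.univ + 2) := by
  obtain ⟨μ', _, -, hvar, hnull⟩ := hM
  obtain ⟨T, hT, hμ'T, hTe⟩ := exists_null_forall_ediam_slice_compl_le μ' hδ hnull
  have hμT : μ T ≤ ENNReal.ofReal ε :=
    calc μ T = μ T - μ' T := by rw [hμ'T, tsub_zero]
      _ ≤ varDist μ μ' := le_iSup₂_of_le T hT (le_max_left _ _)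
      _ ≤ ENNReal.ofReal ε := hvar
  calc beta μ
      ≤ ∫⁻ x, (ENNReal.ofReal ε + 2 * μ.condKernel x (Prod.mk x ⁻¹' T)) ∂μ.fst :=
        lintegral_mono fun x =>
          lintegral_lintegral_ofReal_min_one_dist_le _ (measurable_prodMk_left hT) (hTe x)
    _ = ENNReal.ofReal ε * μ Set.univ + 2 * μ T := by
        rw [lintegral_add_left measurable_const, lintegral_const, Measure.fst_univ,
          lintegral_const_mul' _ _ ENNReal.ofNat_ne_top]
        exact congrArg (_ + 2 * ·) (Measure.lintegral_condKernel_mem hT)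
    _ ≤ ENNReal.ofReal ε * (μ Set.univ + 2) := by
        grw [hμT, mul_add, mul_comm 2]

/-- If `μ ∈ M^X_{2δ,ε}`, then `β(μ) ≤ ε · (μ(X×I) + 2)`. -/
theorem beta_le_of_memM {X I : Type*}
    [MetricSpace X] [CompleteSpace X] [SecondCountableTopology X]
    [MeasurableSpace X] [BorelSpace X]
    [MetricSpace I] [CompleteSpace I] [SecondCountableTopology I]
    [MeasurableSpace I] [BorelSpace I] [Nonempty I]
    (δ ε : ℝ) (hδ : 0 < δ) (hε : 0 < ε)
    (μ : Measure (X × I)) [IsFiniteMeasure μ]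
    (hM : memM μ (2 * δ) (ENNReal.ofReal ε)) :
    beta μ ≤ ENNReal.ofReal ε * (μ Set.univ + 2) :=
  beta_le_of_memM_general δ ε hδ μ hM
end

section
/- Let (E,ρ) and (I,d) be complete separable metric spaces and equip E×I with the metric ρ+d. Let δ, ε > 0 and let μ, μ̂ be finite Borel measures on E×I with μ ∈ M^E_{δ,ε}. If δ' satisfies dPr(μ,μ̂) < δ' < δ/2, then μ̂ ∈ M^E_{δ−2δ', ε+2δ'}. -/
open MeasureTheory Filter Topology ENNReal

/-- The open `ε`-neighbourhood of `A ⊆ E × I` with respect to the sum metric `ρ + d`. -/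
def sumThick {E I : Type*} [PseudoMetricSpace E] [PseudoMetricSpace I] (ε : ℝ)
    (A : Set (E × I)) : Set (E × I) :=
  {p | ∃ q ∈ A, dist p.1 q.1 + dist p.2 q.2 < ε}

/-- The Prohorov metric between finite Borel measures on `E × I`, where `E × I` carries
the sum metric `ρ + d`. -/
noncomputable def dPrSum {E I : Type*} [PseudoMetricSpace E] [PseudoMetricSpace I]
    [MeasurableSpace E] [MeasurableSpace I] (μ ν : Measure (E × I)) : ℝ :=
  sInf {ε : ℝ | 0 < ε ∧ ∀ A : Set (E × I), MeasurableSet A →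
    μ A ≤ ν (sumThick ε A) + ENNReal.ofReal ε ∧ ν A ≤ μ (sumThick ε A) + ENNReal.ofReal ε}

/-! Let `μ'` witness `μ ∈ M_{δ,ε}` and let `S` be its support. The complement of `A_{δ,ε}` is
open and `μ' ⊗ μ'`-null, so `S × S ⊆ A_{δ,ε}`, while `μ Sᶜ ≤ ‖μ - μ'‖ ≤ ε`. Pick `r` with
`dPr(μ, μ̂) < r < δ'` and let `T` be the open `r`-neighbourhood of `S`. The `r`-neighbourhood of
`Tᶜ` misses `S`, so the Prohorov bound gives `μ̂ Tᶜ ≤ μ Sᶜ + r ≤ ε + 2δ'`, which bounds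
`‖μ̂ - μ̂|_T‖`. Two points of `T` that are `(δ - 2δ')`-close in `E` are `r`-close to points of `S`
that are `δ`-close in `E`, hence have `ε`-close marks; so `T × T ⊆ A_{δ-2δ', ε+2δ'}`. -/

namespace MeasureTheory.Measure

variable {X Y : Type*} [MeasurableSpace X] [MeasurableSpace Y]

theorem restrict_prod_restrict_compl_prod {μ : Measure X} {ν : Measure Y} [SFinite μ]
    [SFinite ν] {s : Set X} {t : Set Y} (hs : MeasurableSet s) (ht : MeasurableSet t) :
    ((μ.restrict s).prod (ν.restrict t)) (s ×ˢ t)ᶜ = 0 := by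
  rw [prod_restrict]
  exact mem_ae_iff.mp (self_mem_ae_restrict (hs.prod ht))

variable [TopologicalSpace X] [TopologicalSpace Y]

theorem mk_mem_support_prod {μ : Measure X} {ν : Measure Y} [SFinite μ] [SFinite ν]
    {x : X} {y : Y} (hx : x ∈ μ.support) (hy : y ∈ ν.support) :
    (x, y) ∈ (μ.prod ν).support := by
  rw [mem_support_iff_forall] at hx hy ⊢
  intro W hW
  obtain ⟨U, hU, V, hV, hUV⟩ := mem_nhds_prod_iff.mp hW
  calc 0 < μ U * ν V := ENNReal.mul_pos (hx U hU).ne' (hy V hV).ne'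
    _ = (μ.prod ν) (U ×ˢ V) := (prod_prod U V).symm
    _ ≤ (μ.prod ν) W := measure_mono hUV

theorem support_prod_support_subset_of_isClosed {μ : Measure X} {ν : Measure Y}
    [SFinite μ] [SFinite ν] {A : Set (X × Y)} (hA : IsClosed A) (hAc : (μ.prod ν) Aᶜ = 0) :
    μ.support ×ˢ ν.support ⊆ A := fun _ hp =>
  support_subset_of_isClosed hA (mem_ae_iff.mpr hAc)
    (mk_mem_support_prod hp.1 hp.2)

end MeasureTheory.Measure

theorem measure_sub_le_varDist {X : Type*} [MeasurableSpace X] (μ ν : Measure X)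
    {B : Set X} (hB : MeasurableSet B) : μ B - ν B ≤ varDist μ ν :=
  le_iSup₂_of_le (f := fun B _ => max (μ B - ν B) (ν B - μ B)) B hB (le_max_left _ _)

theorem varDist_restrict_le {X : Type*} [MeasurableSpace X] (μ : Measure X) (T : Set X) :
    varDist μ (μ.restrict T) ≤ μ Tᶜ := by
  refine iSup₂_le fun B hB => max_le ?_ ?_
  · rw [Measure.restrict_apply hB, tsub_le_iff_left]
    calc μ B ≤ μ (B ∩ T) + μ (B \ T) := measure_le_inter_add_sdiff _ _ _
      _ ≤ μ (B ∩ T) + μ Tᶜ := by gcongr; exact Set.sdiff_subset_compl B T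
  · rw [tsub_eq_zero_of_le (Measure.restrict_le_self B)]
    exact zero_le

section SumMetric

variable {E I : Type*} [PseudoMetricSpace E] [PseudoMetricSpace I]

theorem isClosed_Aset (δ : ℝ) (ε : ℝ≥0∞) : IsClosed (Aset (X := E) (I := I) δ ε) := by
  simp only [Aset, Set.ofPred_or]
  exact (isClosed_le continuous_const (by fun_prop)).union
    (isClosed_le (ENNReal.continuous_ofReal.comp (by fun_prop)) continuous_const)

theorem Aset_mono {δ₁ δ₂ : ℝ} {ε₁ ε₂ : ℝ≥0∞} (hδ : δ₂ ≤ δ₁) (hε : ε₁ ≤ ε₂) :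
    Aset (X := E) (I := I) δ₁ ε₁ ⊆ Aset δ₂ ε₂ :=
  fun _ hp => hp.imp hδ.trans (·.trans hε)

theorem isOpen_sumThick (r : ℝ) (A : Set (E × I)) : IsOpen (sumThick r A) := by
  have h : sumThick r A = ⋃ q ∈ A, {p : E × I | dist p.1 q.1 + dist p.2 q.2 < r} := by
    ext p; simp [sumThick]
  rw [h]
  exact isOpen_biUnion fun q _ => isOpen_lt (by fun_prop) continuous_const

theorem sumThick_compl_sumThick_subset (r : ℝ) (S : Set (E × I)) :
    sumThick r (sumThick r S)ᶜ ⊆ Sᶜ := by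
  rintro p ⟨q, hq, hpq⟩ hpS
  exact hq ⟨p, hpS, by rwa [dist_comm q.1, dist_comm q.2]⟩

theorem exists_dist_lt_of_mem_sumThick {r : ℝ} {S : Set (E × I)} {p : E × I}
    (hp : p ∈ sumThick r S) : ∃ q ∈ S, dist p.1 q.1 < r ∧ dist p.2 q.2 < r := by
  obtain ⟨q, hq, hpq⟩ := hp
  exact ⟨q, hq, by linarith [dist_nonneg (x := p.2) (y := q.2)],
    by linarith [dist_nonneg (x := p.1) (y := q.1)]⟩

theorem sumThick_prod_sumThick_subset_Aset {δ ε r : ℝ} (hε : 0 ≤ ε) {S : Set (E × I)}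
    (hS : S ×ˢ S ⊆ Aset δ (ENNReal.ofReal ε)) :
    sumThick r S ×ˢ sumThick r S ⊆ Aset (δ - 2 * r) (ENNReal.ofReal (ε + 2 * r)) := by
  rintro ⟨p, q⟩ ⟨hp, hq⟩
  obtain ⟨p₀, hp₀, hp₁, hp₂⟩ := exists_dist_lt_of_mem_sumThick hp
  obtain ⟨q₀, hq₀, hq₁, hq₂⟩ := exists_dist_lt_of_mem_sumThick hq
  by_cases hfar : δ - 2 * r ≤ dist p.1 q.1
  · exact Or.inl hfar
  have hnear : dist p₀.1 q₀.1 < δ := by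
    linarith [dist_triangle4 p₀.1 p.1 q.1 q₀.1, dist_comm p₀.1 p.1]
  have hmark : dist p₀.2 q₀.2 ≤ ε := by
    rcases hS (Set.mk_mem_prod hp₀ hq₀) with h | h
    · exact absurd h hnear.not_ge
    · exact (ENNReal.ofReal_le_ofReal_iff hε).mp h
  refine Or.inr (ENNReal.ofReal_le_ofReal ?_)
  linarith [dist_triangle4 p.2 p₀.2 q₀.2 q.2, dist_comm q₀.2 q.2]

end SumMetric

theorem exists_lt_of_dPrSum_lt {E I : Type*} [PseudoMetricSpace E] [PseudoMetricSpace I]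
    [MeasurableSpace E] [MeasurableSpace I] {μ ν : Measure (E × I)} [IsFiniteMeasure μ]
    [IsFiniteMeasure ν] {δ' : ℝ} (h : dPrSum μ ν < δ') :
    ∃ r, 0 < r ∧ r < δ' ∧ ∀ A : Set (E × I), MeasurableSet A →
      μ A ≤ ν (sumThick r A) + ENNReal.ofReal r ∧ ν A ≤ μ (sumThick r A) + ENNReal.ofReal r := by
  -- `sInf ∅ = 0`, so `h` says nothing until the defining set is known to be nonempty
  have hne : {r : ℝ | 0 < r ∧ ∀ A : Set (E × I), MeasurableSet A →
      μ A ≤ ν (sumThick r A) + ENNReal.ofReal r ∧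
        ν A ≤ μ (sumThick r A) + ENNReal.ofReal r}.Nonempty := by
    set R := (μ Set.univ + ν Set.univ).toReal + 1
    have htot : μ Set.univ + ν Set.univ ≤ ENNReal.ofReal R := by
      rw [← ENNReal.ofReal_toReal (by finiteness : μ Set.univ + ν Set.univ ≠ ⊤)]
      exact ENNReal.ofReal_le_ofReal (le_add_of_nonneg_right zero_le_one)
    refine ⟨R, by positivity, fun A _ => ⟨?_, ?_⟩⟩
    · exact ((measure_mono (Set.subset_univ A)).trans (le_self_add.trans htot)).trans le_add_self
    · exact ((measure_mono (Set.subset_univ A)).trans (le_add_self.trans htot)).trans le_add_self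
  obtain ⟨r, ⟨hr0, hr⟩, hrδ'⟩ := exists_lt_of_csInf_lt hne h
  exact ⟨r, hr0, hrδ', hr⟩

theorem memM_perturbation_general {E I : Type*}
    [MetricSpace E] [SecondCountableTopology E]
    [MeasurableSpace E] [BorelSpace E]
    [MetricSpace I] [SecondCountableTopology I]
    [MeasurableSpace I] [BorelSpace I]
    (δ ε δ' : ℝ) (hε : 0 < ε)
    (μ μhat : Measure (E × I)) [IsFiniteMeasure μ] [IsFiniteMeasure μhat]
    (hM : memM μ δ (ENNReal.ofReal ε))
    (hPr : dPrSum μ μhat < δ') :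
    memM μhat (δ - 2 * δ') (ENNReal.ofReal (ε + 2 * δ')) := by
  obtain ⟨μ', _, -, hvar, hnull⟩ := hM
  obtain ⟨r, hr0, hrδ', hr⟩ := exists_lt_of_dPrSum_lt hPr
  set T := sumThick r μ'.support
  have hT : MeasurableSet T := (isOpen_sumThick r _).measurableSet
  have hμ : μ μ'.supportᶜ ≤ ENNReal.ofReal ε := by
    simpa using (measure_sub_le_varDist μ μ'
      (Measure.isOpen_compl_support (μ := μ')).measurableSet).trans hvar
  have hμhat : μhat Tᶜ ≤ ENNReal.ofReal (ε + 2 * δ') :=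
    calc μhat Tᶜ ≤ μ (sumThick r Tᶜ) + ENNReal.ofReal r := (hr _ hT.compl).2
      _ ≤ μ μ'.supportᶜ + ENNReal.ofReal r := by
        gcongr; exact sumThick_compl_sumThick_subset r _
      _ ≤ ENNReal.ofReal ε + ENNReal.ofReal r := by gcongr
      _ = ENNReal.ofReal (ε + r) := (ENNReal.ofReal_add hε.le hr0.le).symm
      _ ≤ ENNReal.ofReal (ε + 2 * δ') := ENNReal.ofReal_le_ofReal (by linarith)
  have hTT : T ×ˢ T ⊆ Aset (δ - 2 * δ') (ENNReal.ofReal (ε + 2 * δ')) :=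
    (sumThick_prod_sumThick_subset_Aset hε.le
      (Measure.support_prod_support_subset_of_isClosed (isClosed_Aset _ _) hnull)).trans
      (Aset_mono (by linarith) (ENNReal.ofReal_le_ofReal (by linarith)))
  exact ⟨μhat.restrict T, inferInstance, Measure.restrict_le_self,
    (varDist_restrict_le μhat T).trans hμhat,
    measure_mono_null (Set.compl_subset_compl.2 hTT)
      (Measure.restrict_prod_restrict_compl_prod hT hT)⟩

/-- Perturbation of `M^E_{δ,ε}`: if `μ ∈ M^E_{δ,ε}` and `dPr(μ,μ̂) < δ' < δ/2`
(Prohorov metric w.r.t. the sum metric on `E × I`), then `μ̂ ∈ M^E_{δ−2δ', ε+2δ'}`. -/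
theorem memM_perturbation {E I : Type*}
    [MetricSpace E] [CompleteSpace E] [SecondCountableTopology E]
    [MeasurableSpace E] [BorelSpace E]
    [MetricSpace I] [CompleteSpace I] [SecondCountableTopology I]
    [MeasurableSpace I] [BorelSpace I]
    (δ ε δ' : ℝ) (hδ : 0 < δ) (hε : 0 < ε)
    (μ μhat : Measure (E × I)) [IsFiniteMeasure μ] [IsFiniteMeasure μhat]
    (hM : memM μ δ (ENNReal.ofReal ε))
    (hPr : dPrSum μ μhat < δ') (hδ' : δ' < δ / 2) :
    memM μhat (δ - 2 * δ') (ENNReal.ofReal (ε + 2 * δ')) :=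
  memM_perturbation_general δ ε δ' hε μ μhat hM hPr
end

section
/- Let (E,ρ) and (I,d) be complete separable metric spaces and h ∈ H. Let μ_n (n ∈ ℕ) and μ be finite Borel measures on E×I such that μ_n → μ weakly. If (μ_n⊗μ_n)((E×I)² ∖ A^E_h) = 0 for every n, then (μ⊗μ)((E×I)² ∖ A^E_h) = 0. -/
/-!
The product `ν ⊗ ν` is carried by `supp ν × supp ν` (the support of a finite measure on a
second countable space is conull), so it suffices to show `supp ν × supp ν ⊆ A^E_h`. Since
`A^E_h` is closed, it is enough that every product of balls `B(p, ε) × B(q, ε)` around a point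
of `supp ν × supp ν` meets `A^E_h`. Testing weak convergence against the tent function
`max (ε - ρ(·, p)) 0`, whose support is exactly `B(p, ε)`, shows that `μ_n (B(p, ε)) > 0` for
large `n`; then `(μ_n ⊗ μ_n)(B(p, ε) × B(q, ε)) > 0`, and as `μ_n ⊗ μ_n` is carried by
`A^E_h`, the two sets meet.
-/

open MeasureTheory Filter Topology ENNReal

/-- The set `A^X_h = {((x₁,u₁),(x₂,u₂)) | d(u₁,u₂) ≤ h(r(x₁,x₂))}` for a modulus of
continuity `h`. -/
def AsetH {X I : Type*} [PseudoMetricSpace X] [PseudoMetricSpace I] (h : ℝ → ℝ≥0∞) :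
    Set ((X × I) × (X × I)) :=
  {p | ENNReal.ofReal (dist p.1.2 p.2.2) ≤ h (dist p.1.1 p.2.1)}

/-- Weak convergence of finite Borel measures: convergence of integrals of all bounded
continuous functions. -/
def WeakConv {E : Type*} [TopologicalSpace E] [MeasurableSpace E]
    (μ : ℕ → Measure E) (ν : Measure E) : Prop :=
  ∀ f : BoundedContinuousFunction E ℝ,
    Tendsto (fun n => ∫ x, f x ∂(μ n)) atTop (𝓝 (∫ x, f x ∂ν))

open Metric Set BoundedContinuousFunction

section ballBump

variable {X : Type*} [PseudoMetricSpace X]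

noncomputable def ballBump (p : X) (ε : ℝ) : X →ᵇ ℝ :=
  BoundedContinuousFunction.ofNormedAddCommGroup (fun x => max (ε - dist x p) 0)
    (by fun_prop) |ε| fun x => by
      rw [Real.norm_eq_abs, abs_of_nonneg (le_max_right _ _)]
      exact max_le (by linarith [dist_nonneg (x := x) (y := p), le_abs_self ε]) (abs_nonneg ε)

lemma ballBump_apply (p : X) (ε : ℝ) (x : X) : ballBump p ε x = max (ε - dist x p) 0 := rfl

lemma ballBump_nonneg (p : X) (ε : ℝ) : 0 ≤ ⇑(ballBump p ε) := fun _ => le_max_right _ _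

lemma support_ballBump (p : X) (ε : ℝ) : Function.support (ballBump p ε) = ball p ε := by
  ext x
  simp [ballBump_apply, mem_ball]

lemma integral_ballBump_pos_iff [MeasurableSpace X] [OpensMeasurableSpace X] (μ : Measure X)
    [IsFiniteMeasure μ] (p : X) (ε : ℝ) : 0 < ∫ x, ballBump p ε x ∂μ ↔ 0 < μ (ball p ε) := by
  rw [integral_pos_iff_support_of_nonneg (ballBump_nonneg p ε) ((ballBump p ε).integrable μ),
    support_ballBump]

end ballBump

lemma isClosed_AsetH {X I : Type*} [PseudoMetricSpace X] [PseudoMetricSpace I] {h : ℝ → ℝ≥0∞}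
    (hcont : Continuous h) : IsClosed (AsetH (X := X) (I := I) h) :=
  isClosed_le (ENNReal.continuous_ofReal.comp (by fun_prop)) (hcont.comp (by fun_prop))

namespace WeakConv

variable {X Y : Type*} [PseudoMetricSpace X] [MeasurableSpace X] [OpensMeasurableSpace X]
  [PseudoMetricSpace Y] [MeasurableSpace Y] [OpensMeasurableSpace Y]
  {μ : ℕ → Measure X} [∀ n, IsFiniteMeasure (μ n)] {ν : Measure X} [IsFiniteMeasure ν]
  {μ' : ℕ → Measure Y} [∀ n, IsFiniteMeasure (μ' n)] {ν' : Measure Y} [IsFiniteMeasure ν']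

lemma eventually_measure_ball_pos (hconv : WeakConv μ ν) {p : X} {ε : ℝ}
    (hν : 0 < ν (ball p ε)) : ∀ᶠ n in atTop, 0 < μ n (ball p ε) :=
  ((hconv _).eventually (eventually_gt_nhds ((integral_ballBump_pos_iff ν p ε).2 hν))).mono
    fun n hn => (integral_ballBump_pos_iff (μ n) p ε).1 hn

lemma support_prod_subset_of_isClosed (hconv : WeakConv μ ν) (hconv' : WeakConv μ' ν')
    {A : Set (X × Y)} (hA : IsClosed A) (hnull : ∀ n, (μ n).prod (μ' n) Aᶜ = 0) :
    ν.support ×ˢ ν'.support ⊆ A := by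
  rintro ⟨p, q⟩ ⟨hp, hq⟩
  rw [← hA.closure_eq, Metric.mem_closure_iff]
  intro ε hε
  obtain ⟨n, hμ, hμ'⟩ := ((hconv.eventually_measure_ball_pos
    ((Measure.mem_support_iff_forall p).1 hp _ (ball_mem_nhds p hε))).and
    (hconv'.eventually_measure_ball_pos
    ((Measure.mem_support_iff_forall q).1 hq _ (ball_mem_nhds q hε)))).exists
  have hmeets : (ball (p, q) ε ∩ A).Nonempty := by
    by_contra hempty
    have hsub : ball (p, q) ε ⊆ Aᶜ := fun z hz hzA => hempty ⟨z, hz, hzA⟩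
    have hpos : 0 < (μ n).prod (μ' n) (ball (p, q) ε) := by
      rw [← ball_prod_same, Measure.prod_prod]
      exact ENNReal.mul_pos hμ.ne' hμ'.ne'
    exact hpos.ne' (measure_mono_null hsub (hnull n))
  obtain ⟨z, hz, hzA⟩ := hmeets
  exact ⟨z, hzA, by rwa [dist_comm]⟩

lemma prod_measure_compl_eq_zero [HereditarilyLindelofSpace X] [HereditarilyLindelofSpace Y]
    (hconv : WeakConv μ ν) (hconv' : WeakConv μ' ν') {A : Set (X × Y)} (hA : IsClosed A)
    (hnull : ∀ n, (μ n).prod (μ' n) Aᶜ = 0) : ν.prod ν' Aᶜ = 0 :=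
  measure_mono_null (compl_subset_compl.2 (hconv.support_prod_subset_of_isClosed hconv' hA hnull))
    (Measure.measure_prod_compl_eq_zero Measure.measure_compl_support
      Measure.measure_compl_support)

end WeakConv

theorem prod_supported_AsetH_of_weak_limit_general {E I : Type*}
    [MetricSpace E] [SecondCountableTopology E]
    [MeasurableSpace E] [BorelSpace E]
    [MetricSpace I] [SecondCountableTopology I]
    [MeasurableSpace I] [BorelSpace I]
    (h : ℝ → ℝ≥0∞) (hcont : Continuous h)
    (μ : ℕ → Measure (E × I)) [∀ n, IsFiniteMeasure (μ n)]
    (ν : Measure (E × I)) [IsFiniteMeasure ν]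
    (hconv : WeakConv μ ν)
    (hn : ∀ n, ((μ n).prod (μ n)) (AsetH (X := E) (I := I) h)ᶜ = 0) :
    (ν.prod ν) (AsetH (X := E) (I := I) h)ᶜ = 0 :=
  hconv.prod_measure_compl_eq_zero hconv (isClosed_AsetH hcont) hn

/-- Closedness under weak limits: if each `μ_n ⊗ μ_n` is supported on `A^E_h` and
`μ_n → μ` weakly, then `μ ⊗ μ` is supported on `A^E_h`. -/
theorem prod_supported_AsetH_of_weak_limit {E I : Type*}
    [MetricSpace E] [CompleteSpace E] [SecondCountableTopology E]
    [MeasurableSpace E] [BorelSpace E]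
    [MetricSpace I] [CompleteSpace I] [SecondCountableTopology I]
    [MeasurableSpace I] [BorelSpace I]
    (h : ℝ → ℝ≥0∞) (h0 : h 0 = 0) (hmono : Monotone h) (hcont : Continuous h)
    (μ : ℕ → Measure (E × I)) [∀ n, IsFiniteMeasure (μ n)]
    (ν : Measure (E × I)) [IsFiniteMeasure ν]
    (hconv : WeakConv μ ν)
    (hn : ∀ n, ((μ n).prod (μ n)) (AsetH (X := E) (I := I) h)ᶜ = 0) :
    (ν.prod ν) (AsetH (X := E) (I := I) h)ᶜ = 0 :=
  prod_supported_AsetH_of_weak_limit_general h hcont μ ν hconv hn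
end

section
/- Let (E,ρ) and (I,d) be complete separable metric spaces. For each n ∈ ℕ let ν_n be a finite Borel measure on E and κ_n : E → I Borel measurable, and set μ_n := pushforward of ν_n under x ↦ (x,κ_n(x)). Assume μ_n → μ weakly on E×I for a finite Borel measure μ. Suppose there are Borel sets Z_{n,δ} ⊆ E (n ∈ ℕ, δ > 0) such that the functions x ↦ 1 ∧ diam(κ_n(B_δ(x) ∩ Z_{n,δ})) are Borel measurable and lim_{δ↓0} liminf_{n→∞} [ ν_n(E ∖ Z_{n,δ}) + ∫_{Z_{n,δ}} (1 ∧ diam(κ_n(B_δ(x) ∩ Z_{n,δ}))) ν_n(dx) ] = 0, where B_δ(x) := {y ∈ E : ρ(x,y) < δ} and diam denotes the diameter of a subset of (I,d). Then μ admits a mark function. -/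
open MeasureTheory Filter Topology ENNReal

/-!
Disintegrate `μ = μ.fst ⊗ η`. A measurable choice of atoms is a mark function as soon as `η x` is
a Dirac mass for `μ.fst`-a.e. `x`, i.e. as soon as, for any two separated basic open sets `A` and
`B` of `I`, a.e. `η x A = 0` or `η x B = 0`. Let `ρ` be `μ.fst` with density
`min (η · A) (η · B)` and cut `E` into disjoint open pieces of diameter `< δ` covering
`ρ`-almost everything. By weak convergence, for large `n` every piece `U` carries `ν n`-mass at
least `ρ U / 2` both in `κ n ⁻¹' A` and in `κ n ⁻¹' B`. Either points of `U ∩ Z n δ` are sent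
into both sets, and then the diameters in the criterion are at least the separation `r` of `A`
and `B` on all of `U`, or that mass lies outside `Z n δ`. So the liminf in the criterion is at
least `min 1 r * ρ E / 2` for every `δ`, which forces `ρ = 0`.
-/

open Function ProbabilityTheory TopologicalSpace

namespace WeakConv

variable {X : Type*} [TopologicalSpace X] [MeasurableSpace X]
  {μs : ℕ → Measure X} [∀ n, IsFiniteMeasure (μs n)] {μ : Measure X} [IsFiniteMeasure μ]

lemma tendsto_measure_univ (h : WeakConv μs μ) :
    Tendsto (fun n => μs n Set.univ) atTop (𝓝 (μ Set.univ)) := by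
  rw [← ENNReal.tendsto_toReal_iff (fun n => measure_ne_top _ _) (measure_ne_top _ _)]
  simpa [measureReal_def] using h (BoundedContinuousFunction.const X 1)

variable [PseudoMetrizableSpace X] [OpensMeasurableSpace X]

lemma limsup_measure_le_of_isClosed (h : WeakConv μs μ) {F : Set X} (hF : IsClosed F) :
    atTop.limsup (fun n => μs n F) ≤ μ F :=
  FiniteMeasure.limsup_measure_closed_le_of_tendsto (μ := ⟨μ, inferInstance⟩)
    (μs := fun n => ⟨μs n, inferInstance⟩)
    (FiniteMeasure.tendsto_iff_forall_integral_tendsto.2 h) hF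

lemma le_liminf_measure_of_isOpen (h : WeakConv μs μ) {U : Set X} (hU : IsOpen U) :
    μ U ≤ atTop.liminf fun n => μs n U := by
  refine le_of_forall_lt_imp_le_of_dense fun a ha => ?_
  have ha_top : a ≠ ∞ := (ha.trans_le le_top).ne
  have ha' : a + μ Uᶜ < μ Set.univ := by
    rw [← measure_add_measure_compl hU.measurableSet]
    exact ENNReal.add_lt_add_right (measure_ne_top _ _) ha
  obtain ⟨s, has, hs⟩ := exists_between ha'
  have hmass : ∀ᶠ n in atTop, s < μs n Set.univ :=
    h.tendsto_measure_univ.eventually (eventually_gt_nhds hs)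
  have hcompl : ∀ᶠ n in atTop, a + μs n Uᶜ < s := by
    have : μ Uᶜ < s - a := (ENNReal.cancel_of_ne ha_top).lt_tsub_iff_left.2 has
    filter_upwards [eventually_lt_of_limsup_lt
      ((h.limsup_measure_le_of_isClosed hU.isClosed_compl).trans_lt this)] with n hn
    exact (ENNReal.cancel_of_ne ha_top).lt_tsub_iff_left.1 hn
  refine le_liminf_of_le (by isBoundedDefault) ?_
  filter_upwards [hmass, hcompl] with n h1 h2
  rw [← measure_add_measure_compl (μ := μs n) hU.measurableSet] at h1
  exact ((ENNReal.add_lt_add_iff_right (measure_ne_top _ _)).1 (h2.trans h1)).le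

end WeakConv

lemma exists_disjoint_isOpen_cover_ae {X : Type*} [PseudoMetricSpace X]
    [SeparableSpace X] [MeasurableSpace X] [OpensMeasurableSpace X]
    (ρ : Measure X) [SFinite ρ] {ε : ℝ} (hε : 0 < ε) :
    ∃ U : ℕ → Set X, (∀ i, IsOpen (U i)) ∧ Pairwise (Disjoint on U) ∧
      (∀ i, ∀ y ∈ U i, ∀ z ∈ U i, dist y z < ε) ∧ ρ (⋃ i, U i)ᶜ = 0 := by
  classical
  rcases isEmpty_or_nonempty X with hX | hX
  · exact ⟨fun _ => ∅, fun _ => isOpen_empty, fun _ _ _ => Set.disjoint_empty _,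
      fun _ _ h => h.elim, by simp [Set.eq_empty_of_isEmpty]⟩
  set x := denseSeq X
  -- radii whose spheres are `ρ`-null, so that the boundaries of the pieces carry no mass
  have hr : ∀ i, ∃ r ∈ Set.Ioo (ε / 4) (ε / 2), ρ (frontier (Metric.ball (x i) r)) = 0 := by
    intro i
    simpa only [Metric.thickening_singleton] using
      exists_null_frontier_thickening ρ {x i} (by linarith : ε / 4 < ε / 2)
  choose r hr hfr using hr
  set B := fun i => Metric.ball (x i) (r i)
  refine ⟨fun i => B i \ ⋃ j ∈ Finset.range i, closure (B j), fun i => ?_, ?_, ?_, ?_⟩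
  · exact Metric.isOpen_ball.sdiff (isClosed_biUnion_finset fun _ _ => isClosed_closure)
  · refine (pairwise_disjoint_on _).2 fun i j hij => Set.disjoint_left.2 fun y hi hj => ?_
    exact hj.2 (Set.mem_biUnion (Finset.mem_range.2 hij) (subset_closure hi.1))
  · intro i y hy z hz
    calc dist y z ≤ dist y (x i) + dist z (x i) := dist_triangle_right _ _ _
      _ < r i + r i := add_lt_add hy.1 hz.1
      _ < ε := by linarith [(hr i).2]
  · refine measure_mono_null (fun y hy => ?_) (measure_iUnion_null hfr)
    by_contra hfront
    simp only [Set.mem_iUnion, not_exists] at hfront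
    have hex : ∃ i, y ∈ B i := by
      obtain ⟨i, hi⟩ := (denseRange_denseSeq X).exists_dist_lt y
        (by linarith : 0 < ε / 4)
      exact ⟨i, hi.trans (hr i).1⟩
    refine hy (Set.mem_iUnion.2 ⟨Nat.find hex, Nat.find_spec hex, fun hmem => ?_⟩)
    obtain ⟨j, hj, hyj⟩ := Set.mem_iUnion₂.1 hmem
    have hnot : y ∉ B j := Nat.find_min hex (Finset.mem_range.1 hj)
    exact hfront j ((Metric.isOpen_ball (x := x j)).frontier_eq ▸ ⟨hyj, hnot⟩)

section MarkDefect

variable {E I : Type*} [PseudoMetricSpace E] [PseudoEMetricSpace I]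

open scoped Classical in
noncomputable def markDefect (κ : E → I) (Z : Set E) (δ : ℝ) : E → ℝ≥0∞ :=
  Z.piecewise (fun x => min 1 (Metric.ediam (κ '' (Metric.ball x δ ∩ Z)))) 1

variable {κ : E → I} {Z U : Set E} {δ : ℝ} {x : E}

lemma markDefect_of_mem (hx : x ∈ Z) :
    markDefect κ Z δ x = min 1 (Metric.ediam (κ '' (Metric.ball x δ ∩ Z))) := by
  classical
  exact Set.piecewise_eq_of_mem _ _ _ hx

lemma markDefect_of_notMem (hx : x ∉ Z) : markDefect κ Z δ x = 1 := by
  classical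
  exact Set.piecewise_eq_of_notMem _ _ _ hx

variable [MeasurableSpace E] {ν : Measure E}

lemma lintegral_markDefect (hZ : MeasurableSet Z) :
    ∫⁻ x, markDefect κ Z δ x ∂ν =
      ν Zᶜ + ∫⁻ x in Z, min 1 (Metric.ediam (κ '' (Metric.ball x δ ∩ Z))) ∂ν := by
  classical
  rw [markDefect, lintegral_piecewise hZ, add_comm, Pi.one_def, setLIntegral_one]

lemma measure_preimage_le_setLIntegral_markDefect (hZ : MeasurableSet Z) (hU : MeasurableSet U)
    {A : Set I} (hA : ∀ x ∈ U ∩ Z, κ x ∉ A) :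
    ν (U ∩ κ ⁻¹' A) ≤ ∫⁻ x in U, markDefect κ Z δ x ∂ν := by
  calc ν (U ∩ κ ⁻¹' A) ≤ ν (U \ Z) :=
        measure_mono fun x hx => ⟨hx.1, fun hxZ => hA x ⟨hx.1, hxZ⟩ hx.2⟩
    _ = ∫⁻ x in U \ Z, markDefect κ Z δ x ∂ν := by
        rw [setLIntegral_congr_fun (hU.diff hZ) fun x hx => markDefect_of_notMem hx.2,
          setLIntegral_one]
    _ ≤ ∫⁻ x in U, markDefect κ Z δ x ∂ν := lintegral_mono_set Set.sdiff_subset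

lemma mul_min_measure_preimage_le_setLIntegral_markDefect (hZ : MeasurableSet Z)
    (hU : MeasurableSet U) (hUδ : ∀ y ∈ U, ∀ z ∈ U, dist y z < δ) {A B : Set I} {r : ℝ≥0∞}
    (hAB : ∀ a ∈ A, ∀ b ∈ B, r ≤ edist a b) :
    min 1 r * min (ν (U ∩ κ ⁻¹' A)) (ν (U ∩ κ ⁻¹' B)) ≤ ∫⁻ x in U, markDefect κ Z δ x ∂ν := by
  -- Either `κ` sends points of `U ∩ Z` into both sets, and then every ball of radius `δ` around a
  -- point of `U` sees two images at distance `≥ r`, or the preimage of one set in `U` avoids `Z`.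
  by_cases hA : ∃ a ∈ U ∩ Z, κ a ∈ A
  · by_cases hB : ∃ b ∈ U ∩ Z, κ b ∈ B
    · obtain ⟨a, ha, haA⟩ := hA
      obtain ⟨b, hb, hbB⟩ := hB
      have hpiece : ∀ y ∈ U, min 1 r ≤ markDefect κ Z δ y := by
        intro y hy
        by_cases hyZ : y ∈ Z
        · rw [markDefect_of_mem hyZ]
          refine min_le_min le_rfl ((hAB _ haA _ hbB).trans (Metric.edist_le_ediam_of_mem ?_ ?_))
          · exact Set.mem_image_of_mem κ ⟨Metric.mem_ball'.2 (hUδ y hy a ha.1), ha.2⟩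
          · exact Set.mem_image_of_mem κ ⟨Metric.mem_ball'.2 (hUδ y hy b hb.1), hb.2⟩
        · rw [markDefect_of_notMem hyZ]
          exact min_le_left _ _
      calc min 1 r * min (ν (U ∩ κ ⁻¹' A)) (ν (U ∩ κ ⁻¹' B)) ≤ min 1 r * ν U := by
            gcongr
            exact (min_le_left _ _).trans (measure_mono Set.inter_subset_left)
        _ = ∫⁻ _ in U, min 1 r ∂ν := (setLIntegral_const _ _).symm
        _ ≤ ∫⁻ x in U, markDefect κ Z δ x ∂ν := setLIntegral_mono' hU hpiece
    · push Not at hB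
      exact (mul_le_of_le_one_left' (min_le_left _ _)).trans
        ((min_le_right _ _).trans (measure_preimage_le_setLIntegral_markDefect hZ hU hB))
  · push Not at hA
    exact (mul_le_of_le_one_left' (min_le_left _ _)).trans
      ((min_le_left _ _).trans (measure_preimage_le_setLIntegral_markDefect hZ hU hA))

end MarkDefect

lemma le_liminf_lintegral_markDefect {E I : Type*} [PseudoMetricSpace E]
    [SeparableSpace E] [MeasurableSpace E] [OpensMeasurableSpace E]
    [PseudoEMetricSpace I] {ν : ℕ → Measure E} {κ : ℕ → E → I} {ρ : Measure E}
    [IsFiniteMeasure ρ] {A B : Set I} {r : ℝ≥0∞} (hAB : ∀ a ∈ A, ∀ b ∈ B, r ≤ edist a b)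
    (hρA : ∀ U, IsOpen U → ρ U ≤ atTop.liminf fun n => ν n (U ∩ κ n ⁻¹' A))
    (hρB : ∀ U, IsOpen U → ρ U ≤ atTop.liminf fun n => ν n (U ∩ κ n ⁻¹' B))
    {Z : ℕ → Set E} (hZ : ∀ n, MeasurableSet (Z n)) {δ : ℝ} (hδ : 0 < δ) :
    min 1 r * (ρ Set.univ / 2) ≤
      atTop.liminf fun n => ∫⁻ x, markDefect (κ n) (Z n) δ x ∂ν n := by
  obtain ⟨U, hUo, hUd, hUδ, hUnull⟩ := exists_disjoint_isOpen_cover_ae ρ hδ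
  have hhalf : ∀ {C : Set I}, (∀ V, IsOpen V → ρ V ≤ atTop.liminf fun n => ν n (V ∩ κ n ⁻¹' C)) →
      ∀ i, ∀ᶠ n in atTop, ρ (U i) / 2 ≤ ν n (U i ∩ κ n ⁻¹' C) := by
    intro C hC i
    rcases eq_or_ne (ρ (U i)) 0 with h0 | h0
    · simp [h0]
    · exact (eventually_lt_of_lt_liminf ((ENNReal.half_lt_self h0 (measure_ne_top _ _)).trans_le
        (hC _ (hUo i)))).mono fun _ => le_of_lt
  have hsum : ρ Set.univ = ∑' i, ρ (U i) := by
    rw [← measure_iUnion hUd fun i => (hUo i).measurableSet,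
      ← measure_add_measure_compl (MeasurableSet.iUnion fun i => (hUo i).measurableSet), hUnull,
      add_zero]
  rw [hsum, div_eq_mul_inv, ← ENNReal.tsum_mul_right, ← ENNReal.tsum_mul_left]
  refine ENNReal.tsum_le_of_sum_range_le fun N => le_liminf_of_le (by isBoundedDefault) ?_
  filter_upwards [(eventually_all_finset (Finset.range N)).2
    fun i _ => (hhalf hρA i).and (hhalf hρB i)] with n hn
  calc ∑ i ∈ Finset.range N, min 1 r * (ρ (U i) * 2⁻¹)
      ≤ ∑ i ∈ Finset.range N, ∫⁻ x in U i, markDefect (κ n) (Z n) δ x ∂ν n := by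
        refine Finset.sum_le_sum fun i hi => le_trans ?_
          (mul_min_measure_preimage_le_setLIntegral_markDefect (hZ n) (hUo i).measurableSet
            (hUδ i) hAB)
        rw [← div_eq_mul_inv]
        exact mul_le_mul_right (le_min (hn i hi).1 (hn i hi).2) _
    _ = ∫⁻ x in ⋃ i ∈ Finset.range N, U i, markDefect (κ n) (Z n) δ x ∂ν n :=
        (lintegral_biUnion_finset (hUd.set_pairwise _) (fun i _ => (hUo i).measurableSet) _).symm
    _ ≤ ∫⁻ x, markDefect (κ n) (Z n) δ x ∂ν n := setLIntegral_le_lintegral _ _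

lemma ae_condKernel_eq_zero_or_eq_zero {E I : Type*} [PseudoMetricSpace E]
    [SeparableSpace E] [MeasurableSpace E] [OpensMeasurableSpace E]
    [MetricSpace I] [CompleteSpace I] [SecondCountableTopology I] [MeasurableSpace I]
    [BorelSpace I] [Nonempty I] {ν : ℕ → Measure E} {κ : ℕ → E → I} (hκ : ∀ n, Measurable (κ n))
    {μ : Measure (E × I)} [IsFiniteMeasure μ]
    (hμ : ∀ W, IsOpen W → μ W ≤ atTop.liminf fun n => (ν n).map (fun x => (x, κ n x)) W)
    {Z : ℕ → ℝ → Set E} (hZ : ∀ n δ, MeasurableSet (Z n δ))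
    (hlim : Tendsto (fun δ => atTop.liminf fun n => ∫⁻ x, markDefect (κ n) (Z n δ) δ x ∂ν n)
      (𝓝[>] 0) (𝓝 0))
    {A B : Set I} (hA : IsOpen A) (hB : IsOpen B) (hAB : Metric.AreSeparated A B) :
    ∀ᵐ x ∂μ.fst, μ.condKernel x A = 0 ∨ μ.condKernel x B = 0 := by
  obtain ⟨r, hr0, hr⟩ := hAB
  set η := μ.condKernel
  set f : E → ℝ≥0∞ := fun x => min (η x A) (η x B)
  have hf : Measurable f :=
    (η.measurable_coe hA.measurableSet).min (η.measurable_coe hB.measurableSet)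
  set ρ := μ.fst.withDensity f
  have : IsFiniteMeasure ρ := by
    refine isFiniteMeasure_withDensity (ne_top_of_le_ne_top (measure_ne_top μ.fst Set.univ) ?_)
    rw [← lintegral_one]
    exact lintegral_mono fun x => (min_le_left _ _).trans prob_le_one
  have hρ : ∀ C, IsOpen C → (∀ x, f x ≤ η x C) →
      ∀ U, IsOpen U → ρ U ≤ atTop.liminf fun n => ν n (U ∩ κ n ⁻¹' C) := by
    intro C hC hfC U hU
    calc ρ U = ∫⁻ x in U, f x ∂μ.fst := withDensity_apply _ hU.measurableSet
      _ ≤ ∫⁻ x in U, η x C ∂μ.fst := lintegral_mono hfC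
      _ = μ (U ×ˢ C) := by
        rw [← Measure.compProd_apply_prod hU.measurableSet hC.measurableSet, μ.disintegrate]
      _ ≤ atTop.liminf fun n => (ν n).map (fun x => (x, κ n x)) (U ×ˢ C) := hμ _ (hU.prod hC)
      _ = atTop.liminf fun n => ν n (U ∩ κ n ⁻¹' C) := by
        congr 1 with n
        rw [Measure.map_apply (measurable_id'.prodMk (hκ n))
          (hU.measurableSet.prod hC.measurableSet)]
        rfl
  have hbound : ∀ δ ∈ Set.Ioi (0 : ℝ), min 1 r * (ρ Set.univ / 2) ≤
      atTop.liminf fun n => ∫⁻ x, markDefect (κ n) (Z n δ) δ x ∂ν n := fun δ hδ =>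
    le_liminf_lintegral_markDefect hr (hρ A hA fun _ => min_le_left _ _)
      (hρ B hB fun _ => min_le_right _ _) (fun n => hZ n δ) hδ
  have hρ0 : ρ Set.univ = 0 := by
    have := ge_of_tendsto hlim (eventually_nhdsWithin_of_forall hbound)
    simpa [hr0, ENNReal.div_eq_zero_iff] using this
  rw [withDensity_apply _ MeasurableSet.univ, Measure.restrict_univ, lintegral_eq_zero_iff hf]
    at hρ0
  filter_upwards [hρ0] with x hx
  exact min_eq_zero.1 hx

lemma MeasureTheory.Measure.exists_eq_dirac_of_areSeparated {X : Type*} [MetricSpace X]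
    [SecondCountableTopology X] [MeasurableSpace X] [BorelSpace X] (θ : Measure X)
    [IsProbabilityMeasure θ] {b : Set (Set X)} (hb : IsTopologicalBasis b)
    (h : ∀ A ∈ b, ∀ B ∈ b, Metric.AreSeparated A B → θ A = 0 ∨ θ B = 0) :
    ∃ p, θ = Measure.dirac p := by
  have hsupp : θ.support.Subsingleton := by
    intro p hp q hq
    by_contra hpq
    set d := dist p q
    have hd : 0 < d := dist_pos.2 hpq
    obtain ⟨A, hAb, hpA, hA⟩ := hb.exists_subset_of_mem_open
      (Metric.mem_ball_self (x := p) (by linarith : 0 < d / 3)) Metric.isOpen_ball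
    obtain ⟨B, hBb, hqB, hB⟩ := hb.exists_subset_of_mem_open
      (Metric.mem_ball_self (x := q) (by linarith : 0 < d / 3)) Metric.isOpen_ball
    have hsep : Metric.AreSeparated A B := by
      refine ⟨ENNReal.ofReal (d / 3), by simpa using hd, fun a ha c hc => ?_⟩
      rw [edist_dist]
      refine ENNReal.ofReal_le_ofReal ?_
      have ha' := Metric.mem_ball'.1 (hA ha)
      have hc' := Metric.mem_ball.1 (hB hc)
      linarith [dist_triangle4 p a c q]
    rcases h A hAb B hBb hsep with h0 | h0
    · exact ((Measure.mem_support_iff_forall p).1 hp A ((hb.isOpen hAb).mem_nhds hpA)).ne' h0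
    · exact ((Measure.mem_support_iff_forall q).1 hq B ((hb.isOpen hBb).mem_nhds hqB)).ne' h0
  obtain ⟨p, hp⟩ := θ.nonempty_support (IsProbabilityMeasure.ne_zero θ)
  have hae : (id : X → X) =ᵐ[θ] fun _ => p :=
    measure_mono_null (fun x hx hx' => hx (hsupp hx' hp)) θ.measure_compl_support
  refine ⟨p, ?_⟩
  rw [← Measure.map_id (μ := θ), Measure.map_congr hae, Measure.map_const, measure_univ, one_smul]

lemma ProbabilityTheory.Kernel.exists_measurable_ae_eq_dirac_s15 {X Y : Type*} [MeasurableSpace X]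
    [MeasurableSpace Y] [MeasurableSpace.CountablyGenerated Y] [Nonempty Y] (η : Kernel X Y)
    (μ : Measure X) (h : ∀ᵐ x ∂μ, ∃ y, η x = Measure.dirac y) :
    ∃ f : X → Y, Measurable f ∧ ∀ᵐ x ∂μ, η x = Measure.dirac (f x) := by
  classical
  set f : X → Y := fun x => if hx : ∃ y, η x = Measure.dirac y then hx.choose else
    Classical.arbitrary Y
  have hf : ∀ᵐ x ∂μ, η x = Measure.dirac (f x) := h.mono fun x hx => by
    simp only [f, dif_pos hx]
    exact hx.choose_spec
  -- `f ⁻¹' s` agrees a.e. with the measurable set where `η · s = 1`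
  have hfm : NullMeasurable f μ := fun s hs =>
    ((η.measurable_coe hs) (measurableSet_singleton 1)).nullMeasurableSet.congr <|
      eventuallyEq_set.2 <| hf.mono fun x hx => by
        simp [hx, Measure.dirac_apply' _ hs, Set.indicator_eq_one_iff_mem]
  refine ⟨hfm.aemeasurable.mk f, hfm.aemeasurable.measurable_mk, ?_⟩
  filter_upwards [hf, hfm.aemeasurable.ae_eq_mk] with x h1 h2
  rw [h1, h2]

theorem markFunction_of_diam_criterion_general {E I : Type*}
    [MetricSpace E] [SecondCountableTopology E]
    [MeasurableSpace E] [BorelSpace E]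
    [MetricSpace I] [CompleteSpace I] [SecondCountableTopology I]
    [MeasurableSpace I] [BorelSpace I]
    (ν : ℕ → Measure E) [∀ n, IsFiniteMeasure (ν n)]
    (κ : ℕ → E → I) (hκ : ∀ n, Measurable (κ n))
    (μ : Measure (E × I)) [IsFiniteMeasure μ]
    (hconv : WeakConv (fun n => (ν n).map (fun x => (x, κ n x))) μ)
    (Z : ℕ → ℝ → Set E) (hZ : ∀ n δ, MeasurableSet (Z n δ))
    (hlim : Tendsto (fun δ : ℝ => Filter.liminf (fun n =>
        (ν n) (Z n δ)ᶜ +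
          ∫⁻ x in Z n δ, min 1 (EMetric.diam (κ n '' (Metric.ball x δ ∩ Z n δ))) ∂(ν n))
        atTop)
      (𝓝[>] (0 : ℝ)) (𝓝 0)) :
    ∃ κ₀ : E → I, IsMarkFunction μ κ₀ := by
  rcases isEmpty_or_nonempty E with hE | ⟨⟨x₀⟩⟩
  · exact ⟨κ 0, hκ 0, Subsingleton.elim _ _⟩
  have : Nonempty I := ⟨κ 0 x₀⟩
  have hlim' : Tendsto (fun δ => atTop.liminf fun n => ∫⁻ x, markDefect (κ n) (Z n δ) δ x ∂ν n)
      (𝓝[>] 0) (𝓝 0) := by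
    simp only [lintegral_markDefect (hZ _ _)]
    exact hlim
  set b := countableBasis I
  have hbc := countable_countableBasis I
  have hsep : ∀ᵐ x ∂μ.fst, ∀ A ∈ b, ∀ B ∈ b, Metric.AreSeparated A B →
      μ.condKernel x A = 0 ∨ μ.condKernel x B = 0 := by
    refine (ae_ball_iff hbc).2 fun A hA => (ae_ball_iff hbc).2 fun B hB => ?_
    by_cases hAB : Metric.AreSeparated A B
    · exact (ae_condKernel_eq_zero_or_eq_zero hκ (fun W hW => hconv.le_liminf_measure_of_isOpen hW)
        hZ hlim' (isOpen_of_mem_countableBasis hA)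
        (isOpen_of_mem_countableBasis hB) hAB).mono fun _ h _ => h
    · exact ae_of_all _ fun _ h => absurd h hAB
  obtain ⟨κ₀, hκ₀, hdirac⟩ := μ.condKernel.exists_measurable_ae_eq_dirac_s15 μ.fst <| hsep.mono
    fun x hx => (μ.condKernel x).exists_eq_dirac_of_areSeparated
      (isBasis_countableBasis I) hx
  refine ⟨κ₀, hκ₀, ?_⟩
  calc μ = μ.fst ⊗ₘ μ.condKernel := μ.disintegrate _ |>.symm
    _ = μ.fst ⊗ₘ Kernel.deterministic κ₀ hκ₀ :=
      Measure.compProd_congr <| hdirac.mono fun x hx => by rw [hx, Kernel.deterministic_apply]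
    _ = μ.fst.map fun x => (x, κ₀ x) := Measure.compProd_deterministic hκ₀

/-- Diameter criterion for a weak limit of functionally marked measures to admit a mark
function. -/
theorem markFunction_of_diam_criterion {E I : Type*}
    [MetricSpace E] [CompleteSpace E] [SecondCountableTopology E]
    [MeasurableSpace E] [BorelSpace E]
    [MetricSpace I] [CompleteSpace I] [SecondCountableTopology I]
    [MeasurableSpace I] [BorelSpace I]
    (ν : ℕ → Measure E) [∀ n, IsFiniteMeasure (ν n)]
    (κ : ℕ → E → I) (hκ : ∀ n, Measurable (κ n))
    (μ : Measure (E × I)) [IsFiniteMeasure μ]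
    (hconv : WeakConv (fun n => (ν n).map (fun x => (x, κ n x))) μ)
    (Z : ℕ → ℝ → Set E) (hZ : ∀ n δ, MeasurableSet (Z n δ))
    (hdiammeas : ∀ n, ∀ δ : ℝ, Measurable (fun x : E =>
      min 1 (EMetric.diam (κ n '' (Metric.ball x δ ∩ Z n δ)))))
    (hlim : Tendsto (fun δ : ℝ => Filter.liminf (fun n =>
        (ν n) (Z n δ)ᶜ +
          ∫⁻ x in Z n δ, min 1 (EMetric.diam (κ n '' (Metric.ball x δ ∩ Z n δ))) ∂(ν n))
        atTop)
      (𝓝[>] (0 : ℝ)) (𝓝 0)) :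
    ∃ κ₀ : E → I, IsMarkFunction μ κ₀ :=
  markFunction_of_diam_criterion_general ν κ hκ μ hconv Z hZ hlim
end

section
/- Let (E,ρ) and (I,d) be complete separable metric spaces, let μ be a finite Borel measure on E×I that admits a mark function, and let μ_n (n ∈ ℕ) be finite Borel measures on E×I with μ_n → μ weakly. Then β(μ) = 0 and β(μ_n) → 0 as n → ∞. -/
/-! If `κ` is a mark function then `K_x = δ_{κ x}` for `ν`-a.e. `x`, so `β(μ) = 0`. For the
sequence, compare each `K_x` with a single point: the truncated metric `1 ∧ d` satisfies the
triangle inequality, so `β(m) ≤ 2 ∫ (1 ∧ d(u, h x)) m(dx, du)` for any `h`. Taking `h = κ` makes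
the right side vanish at `μ` but is not continuous; instead embed `I` isometrically into `ℓ^∞` and
replace `κ` by a bounded continuous `g` close to `ι ∘ κ` in `ν`-measure (density of `C_b` in
`L¹`, after truncation). Then the integrand `1 ∧ ‖ι u - g x‖` is bounded continuous, its
integral is small at `μ`, and weak convergence carries this to `μ_n`. -/

open MeasureTheory Filter Topology ENNReal

open ProbabilityTheory
open scoped BoundedContinuousFunction

lemma min_one_add_le_add_min_one {a b : ℝ} (ha : 0 ≤ a) (hb : 0 ≤ b) :
    min 1 (a + b) ≤ min 1 a + min 1 b := by
  simp only [min_def]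
  split_ifs <;> linarith

lemma min_one_dist_le_add {Y : Type*} [PseudoMetricSpace Y] (a b c : Y) :
    min 1 (dist a b) ≤ min 1 (dist a c) + min 1 (dist b c) :=
  calc min 1 (dist a b) ≤ min 1 (dist a c + dist b c) :=
        min_le_min le_rfl (dist_triangle_right a b c)
    _ ≤ min 1 (dist a c) + min 1 (dist b c) :=
        min_one_add_le_add_min_one dist_nonneg dist_nonneg

section Beta

variable {X I : Type*} [MeasurableSpace X] [MetricSpace I] [MeasurableSpace I]
  [StandardBorelSpace I] [Nonempty I]

lemma IsMarkFunction.beta_eq_zero {μ : Measure (X × I)} [IsFiniteMeasure μ] {κ : X → I}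
    (hκ : IsMarkFunction μ κ) : beta μ = 0 := by
  obtain ⟨hκm, hμ⟩ := hκ
  have hcond : ∀ᵐ x ∂μ.fst, Kernel.deterministic κ hκm x = μ.condKernel x :=
    eq_condKernel_of_measure_eq_compProd _ (by rwa [Measure.compProd_deterministic])
  refine (lintegral_congr_ae ?_).trans lintegral_zero
  filter_upwards [hcond] with x hx
  simp [← hx, Kernel.deterministic_apply, lintegral_dirac]

lemma beta_le_two_mul_lintegral {c : X × I → ℝ≥0∞} (hc : Measurable c)
    (hle : ∀ x u v, ENNReal.ofReal (min 1 (dist u v)) ≤ c (x, u) + c (x, v))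
    (m : Measure (X × I)) [IsFiniteMeasure m] :
    beta m ≤ 2 * ∫⁻ p, c p ∂m := by
  have hpt (x : X) : ∫⁻ u, ∫⁻ v, ENNReal.ofReal (min 1 (dist u v)) ∂m.condKernel x ∂m.condKernel x
      ≤ 2 * ∫⁻ u, c (x, u) ∂m.condKernel x :=
    calc _ ≤ ∫⁻ u, ∫⁻ v, (c (x, u) + c (x, v)) ∂m.condKernel x ∂m.condKernel x :=
          lintegral_mono fun u => lintegral_mono fun v => hle x u v
      _ = ∫⁻ u, c (x, u) ∂m.condKernel x + ∫⁻ v, c (x, v) ∂m.condKernel x := by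
          simp only [lintegral_add_left' measurable_const.aemeasurable,
            lintegral_add_right' _ aemeasurable_const, lintegral_const, measure_univ, mul_one]
      _ = 2 * ∫⁻ u, c (x, u) ∂m.condKernel x := (two_mul _).symm
  calc beta m ≤ ∫⁻ x, 2 * ∫⁻ u, c (x, u) ∂m.condKernel x ∂m.fst := lintegral_mono hpt
    _ = 2 * ∫⁻ p, c p ∂m := by
      rw [lintegral_const_mul _ hc.lintegral_kernel_prod_right']
      conv_rhs => rw [← m.disintegrate m.condKernel, Measure.lintegral_compProd hc]

end Beta

lemma ofReal_min_one_dist_le_indicator_add {E B : Type*} [SeminormedAddCommGroup B]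
    (s : Set E) (f g : E → B) (x : E) :
    ENNReal.ofReal (min 1 (dist (f x) (g x))) ≤ s.indicator 1 x + ‖sᶜ.indicator f x - g x‖ₑ := by
  by_cases hx : x ∈ s
  · rw [Set.indicator_of_mem hx, Pi.one_apply, ← ENNReal.ofReal_one]
    exact le_add_right (ENNReal.ofReal_le_ofReal (min_le_left 1 _))
  · rw [Set.indicator_of_notMem hx, Set.indicator_of_mem (Set.mem_compl hx), dist_eq_norm,
      ← ofReal_norm]
    exact le_add_left (ENNReal.ofReal_le_ofReal (min_le_right 1 _))

section Approximation

variable {E : Type*} [MeasurableSpace E]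

lemma tendsto_measure_setOf_nat_lt (ν : Measure E) [IsFiniteMeasure ν] {g : E → ℝ}
    (hg : Measurable g) : Tendsto (fun n : ℕ => ν {x | n < g x}) atTop (𝓝 0) := by
  have hempty : ⋂ n : ℕ, {x | (n : ℝ) < g x} = ∅ :=
    Set.eq_empty_of_forall_notMem fun x hx =>
      (exists_nat_ge (g x)).elim fun n hn => (Set.mem_iInter.1 hx n).not_ge hn
  have hanti : Antitone fun n : ℕ => {x | (n : ℝ) < g x} :=
    fun _ _ hmn => Set.ofPred_subset_ofPred.2 fun _ hx => (Nat.cast_le.2 hmn).trans_lt hx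
  simpa [hempty, Function.comp_def] using tendsto_measure_iInter_atTop
    (fun n => (measurableSet_lt measurable_const hg).nullMeasurableSet) hanti
    ⟨0, measure_ne_top ν _⟩

/-- Truncating `f` to a ball of large radius costs little in measure, and the truncation is
integrable, hence approximable in `L¹` by bounded continuous functions. -/
lemma exists_boundedContinuous_lintegral_min_one_dist_lt [TopologicalSpace E] [NormalSpace E]
    [BorelSpace E] {B : Type*} [NormedAddCommGroup B] [NormedSpace ℝ B] (ν : Measure E)
    [IsFiniteMeasure ν] [ν.WeaklyRegular] {f : E → B} (hf : StronglyMeasurable f) {ε : ℝ≥0∞}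
    (hε : 0 < ε) : ∃ g : E →ᵇ B, ∫⁻ x, ENNReal.ofReal (min 1 (dist (f x) (g x))) ∂ν < ε := by
  obtain ⟨N, hN⟩ := ((tendsto_measure_setOf_nat_lt ν hf.norm.measurable).eventually_lt_const
    (ENNReal.half_pos hε.ne')).exists
  set s := {x | (N : ℝ) < ‖f x‖}
  have hs : MeasurableSet s := measurableSet_lt measurable_const hf.norm.measurable
  have hint : Integrable (sᶜ.indicator f) ν := by
    refine Integrable.of_bound (hf.indicator hs.compl).aestronglyMeasurable N
      (ae_of_all _ fun x => ?_)
    by_cases hx : x ∈ s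
    · simp [hx]
    · simpa [hx] using not_lt.1 hx
  obtain ⟨g, hg, hgi⟩ := hint.exists_boundedContinuous_lintegral_sub_le (ENNReal.half_pos hε.ne').ne'
  refine ⟨g, ?_⟩
  calc ∫⁻ x, ENNReal.ofReal (min 1 (dist (f x) (g x))) ∂ν
      ≤ ∫⁻ x, (s.indicator 1 x + ‖sᶜ.indicator f x - g x‖ₑ) ∂ν :=
        lintegral_mono fun x => ofReal_min_one_dist_le_indicator_add s f g x
    _ = ν s + ∫⁻ x, ‖sᶜ.indicator f x - g x‖ₑ ∂ν := by
        rw [lintegral_add_left (measurable_one.indicator hs), lintegral_indicator_one hs]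
    _ < ε / 2 + ε / 2 := ENNReal.add_lt_add_of_lt_of_le (hint.sub hgi).2.ne hN hg
    _ = ε := ENNReal.add_halves ε

end Approximation

lemma WeakConv.tendsto_lintegral_ofReal {E : Type*} [TopologicalSpace E] [MeasurableSpace E]
    [OpensMeasurableSpace E] {μs : ℕ → Measure E} {μ : Measure E} [∀ n, IsFiniteMeasure (μs n)]
    [IsFiniteMeasure μ] (h : WeakConv μs μ) {F : E →ᵇ ℝ} (hF : 0 ≤ F) :
    Tendsto (fun n => ∫⁻ x, ENNReal.ofReal (F x) ∂μs n) atTop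
      (𝓝 (∫⁻ x, ENNReal.ofReal (F x) ∂μ)) := by
  have hlin (ν : Measure E) [IsFiniteMeasure ν] :
      ∫⁻ x, ENNReal.ofReal (F x) ∂ν = ENNReal.ofReal (∫ x, F x ∂ν) :=
    (ofReal_integral_eq_lintegral_ofReal (F.integrable ν) (ae_of_all _ hF)).symm
  simp only [hlin]
  exact (ENNReal.continuous_ofReal.tendsto _).comp (h F)

lemma IsMarkFunction.exists_boundedContinuous_lintegral_lt_and_beta_le {E I : Type*}
    [MetricSpace E] [MeasurableSpace E] [BorelSpace E] [MetricSpace I] [SecondCountableTopology I]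
    [MeasurableSpace I] [BorelSpace I] [StandardBorelSpace I] [Nonempty I]
    {μ : Measure (E × I)} [IsFiniteMeasure μ] {κ : E → I} (hκ : IsMarkFunction μ κ) {ε : ℝ≥0∞}
    (hε : 0 < ε) :
    ∃ F : E × I →ᵇ ℝ, 0 ≤ F ∧ ∫⁻ p, ENNReal.ofReal (F p) ∂μ < ε ∧
      ∀ (m : Measure (E × I)) [IsFiniteMeasure m],
        beta m ≤ 2 * ∫⁻ p, ENNReal.ofReal (F p) ∂m := by
  obtain ⟨hκm, hμ⟩ := hκ
  let ι := kuratowskiEmbedding I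
  have hι : Isometry ι := kuratowskiEmbedding.isometry I
  obtain ⟨g, hg⟩ := exists_boundedContinuous_lintegral_min_one_dist_lt μ.fst
    (hι.continuous.comp_stronglyMeasurable hκm.stronglyMeasurable) hε
  have hF01 (p : E × I) : min 1 (dist (ι p.2) (g p.1)) ∈ Set.Icc (0 : ℝ) 1 :=
    ⟨le_min zero_le_one dist_nonneg, min_le_left _ _⟩
  let F : E × I →ᵇ ℝ := .mkOfBound ⟨fun p => min 1 (dist (ι p.2) (g p.1)),
    continuous_const.min ((hι.continuous.comp continuous_snd).dist g.continuous.fst')⟩ 1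
    fun p q => Real.dist_le_of_mem_Icc_01 (hF01 p) (hF01 q)
  have hFm : Measurable fun p => ENNReal.ofReal (F p) :=
    (ENNReal.continuous_ofReal.comp F.continuous).measurable
  refine ⟨F, fun p => (hF01 p).1, ?_, fun m _ => beta_le_two_mul_lintegral hFm (fun x u v => ?_) m⟩
  · rw [hμ, lintegral_map hFm (by fun_prop)]
    exact hg
  · refine (ENNReal.ofReal_le_ofReal ?_).trans ENNReal.ofReal_add_le
    rw [← hι.dist_eq u v]
    exact min_one_dist_le_add _ _ _

theorem beta_tendsto_zero_of_weak_limit_markFunction_general {E I : Type*}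
    [MetricSpace E]
    [MeasurableSpace E] [BorelSpace E]
    [MetricSpace I] [CompleteSpace I] [SecondCountableTopology I]
    [MeasurableSpace I] [BorelSpace I] [Nonempty I]
    (μ : Measure (E × I)) [IsFiniteMeasure μ]
    (hmark : ∃ κ : E → I, IsMarkFunction μ κ)
    (μs : ℕ → Measure (E × I)) [∀ n, IsFiniteMeasure (μs n)]
    (hconv : WeakConv μs μ) :
    beta μ = 0 ∧ Tendsto (fun n => beta (μs n)) atTop (𝓝 0) := by
  obtain ⟨κ, hκ⟩ := hmark
  refine ⟨hκ.beta_eq_zero, ENNReal.tendsto_nhds_zero.2 fun ε hε => ?_⟩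
  obtain ⟨F, hF0, hFμ, hβF⟩ :=
    hκ.exists_boundedContinuous_lintegral_lt_and_beta_le (ENNReal.half_pos hε.ne')
  filter_upwards [(hconv.tendsto_lintegral_ofReal hF0).eventually_lt_const hFμ] with n hn
  calc beta (μs n) ≤ 2 * ∫⁻ p, ENNReal.ofReal (F p) ∂μs n := hβF (μs n)
    _ ≤ 2 * (ε / 2) := by gcongr
    _ = ε := ENNReal.mul_div_cancel two_ne_zero ofNat_ne_top

/-- If `μ` admits a mark function and `μ_n → μ` weakly, then `β(μ) = 0` and
`β(μ_n) → 0`. -/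
theorem beta_tendsto_zero_of_weak_limit_markFunction {E I : Type*}
    [MetricSpace E] [CompleteSpace E] [SecondCountableTopology E]
    [MeasurableSpace E] [BorelSpace E]
    [MetricSpace I] [CompleteSpace I] [SecondCountableTopology I]
    [MeasurableSpace I] [BorelSpace I] [Nonempty I]
    (μ : Measure (E × I)) [IsFiniteMeasure μ]
    (hmark : ∃ κ : E → I, IsMarkFunction μ κ)
    (μs : ℕ → Measure (E × I)) [∀ n, IsFiniteMeasure (μs n)]
    (hconv : WeakConv μs μ) :
    beta μ = 0 ∧ Tendsto (fun n => beta (μs n)) atTop (𝓝 0) :=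
  beta_tendsto_zero_of_weak_limit_markFunction_general μ hmark μs hconv
end

section
/- Let (E,ρ) be a metric space, J ⊆ ℝ an interval, and e : J → E a càdlàg path (right-continuous with left limits at every point of J). Let δ > 0 and w ∈ [0,∞), and assume that for all t₁, t, t₂ ∈ J with t₁ ≤ t ≤ t₂ and t₂ − t₁ ≤ δ one has min(ρ(e(t),e(t₁)), ρ(e(t₂),e(t))) ≤ w. Let F ⊆ E be any set, and let Q ⊆ J be such that for every t ∈ J there exist t₁, t₂ ∈ Q with t₁ ≤ t ≤ t₂ ≤ t₁ + δ. If infDist(e(t), F) > w for all t ∈ Q, then for every t ∈ J one has e(t) ∉ F, and moreover every left limit of e at a point of J avoids F, i.e. whenever y ∈ E satisfies e(s) → y as s → t from the left within J (for some t ∈ J), then y ∉ F. -/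
open MeasureTheory Filter Topology ENNReal

/-- If a càdlàg path `e` on an interval `J` satisfies the modulus-of-càdlàgness bound
`min(ρ(e t, e t₁), ρ(e t₂, e t)) ≤ w` for all `t₁ ≤ t ≤ t₂` in `J` with `t₂ − t₁ ≤ δ`,
`Q ⊆ J` is such that every `t ∈ J` lies between some `t₁ ≤ t ≤ t₂ ≤ t₁ + δ` with
`t₁, t₂ ∈ Q`, and `infDist(e t, F) > w` for all `t ∈ Q`, then `e` and all its left limits
avoid `F` on all of `J`. -/
theorem cadlag_path_avoids_set {E : Type*} [MetricSpace E]
    (J : Set ℝ) (hJ : J.OrdConnected) (e : ℝ → E)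
    (hrc : ∀ t ∈ J, Tendsto e (𝓝[J ∩ Set.Ici t] t) (𝓝 (e t)))
    (hll : ∀ t ∈ J, (𝓝[J ∩ Set.Iio t] t).NeBot →
      ∃ y : E, Tendsto e (𝓝[J ∩ Set.Iio t] t) (𝓝 y))
    (δ w : ℝ) (hδ : 0 < δ) (hw : 0 ≤ w)
    (hmod : ∀ t₁ ∈ J, ∀ t ∈ J, ∀ t₂ ∈ J, t₁ ≤ t → t ≤ t₂ → t₂ - t₁ ≤ δ →
      min (dist (e t) (e t₁)) (dist (e t₂) (e t)) ≤ w)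
    (F : Set E) (Q : Set ℝ) (hQ : Q ⊆ J)
    (hQcover : ∀ t ∈ J, ∃ t₁ ∈ Q, ∃ t₂ ∈ Q, t₁ ≤ t ∧ t ≤ t₂ ∧ t₂ ≤ t₁ + δ)
    (hdist : ∀ t ∈ Q, ENNReal.ofReal w < EMetric.infEdist (e t) F) :
    (∀ t ∈ J, e t ∉ F) ∧
    (∀ t ∈ J, ∀ y : E, (𝓝[J ∩ Set.Iio t] t).NeBot →
      Tendsto e (𝓝[J ∩ Set.Iio t] t) (𝓝 y) → y ∉ F) := by
  have key : ∀ a ∈ Q, ∀ y ∈ F, ¬ (dist (e a) y ≤ w) := by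
    intro a ha y hy h
    have h1 : EMetric.infEdist (e a) F ≤ edist (e a) y :=
      EMetric.infEdist_le_edist_of_mem hy
    have h2 : edist (e a) y ≤ ENNReal.ofReal w := by
      rw [edist_dist]; exact ENNReal.ofReal_le_ofReal h
    exact absurd (hdist a ha) (not_lt.2 (h1.trans h2))
  constructor
  · intro t ht htF
    obtain ⟨t₁, ht₁, t₂, ht₂, h1t, ht2, hδ'⟩ := hQcover t ht
    have := hmod t₁ (hQ ht₁) t ht t₂ (hQ ht₂) h1t ht2 (by linarith)
    rcases min_le_iff.1 this with h | h
    · exact key t₁ ht₁ (e t) htF (by rwa [dist_comm])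
    · exact key t₂ ht₂ (e t) htF h
  · intro t ht y hne hy hyF
    have hab : ∃ a ∈ Q, ∃ b ∈ Q, a < t ∧ t ≤ b ∧ b - a ≤ δ := by
      obtain ⟨t₁, ht₁, t₂, ht₂, h1t, ht2, hδ'⟩ := hQcover t ht
      rcases lt_or_eq_of_le h1t with h | h
      · exact ⟨t₁, ht₁, t₂, ht₂, h, ht2, by linarith⟩
      · subst h
        have hmem : (J ∩ Set.Iio t₁) ∩ Set.Ioi (t₁ - δ) ∈ 𝓝[J ∩ Set.Iio t₁] t₁ :=
          Filter.inter_mem self_mem_nhdsWithin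
            (nhdsWithin_le_nhds (Ioi_mem_nhds (by linarith)))
        obtain ⟨s, ⟨⟨hsJ, hst⟩, hsδ⟩⟩ := hne.nonempty_of_mem hmem
        obtain ⟨s₁, hs₁, s₂, hs₂, hs1, hss2, hs2δ⟩ := hQcover s hsJ
        rcases le_or_gt t₁ s₂ with h2 | h2
        · exact ⟨s₁, hs₁, s₂, hs₂, lt_of_le_of_lt hs1 hst, h2, by linarith⟩
        · have hδs : t₁ - δ < s := hsδ
          exact ⟨s₂, hs₂, t₁, ht₁, h2, le_refl _, by linarith⟩
    obtain ⟨a, haQ, b, hbQ, hat, htb, hba⟩ := hab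
    have hev : ∀ᶠ u in 𝓝[J ∩ Set.Iio t] t,
        min (dist (e u) (e a)) (dist (e b) (e u)) ≤ w := by
      have hmem : (J ∩ Set.Iio t) ∩ Set.Ioi a ∈ 𝓝[J ∩ Set.Iio t] t :=
        Filter.inter_mem self_mem_nhdsWithin
          (nhdsWithin_le_nhds (Ioi_mem_nhds hat))
      filter_upwards [hmem] with u hu
      obtain ⟨⟨huJ, hut⟩, hau⟩ := hu
      exact hmod a (hQ haQ) u huJ b (hQ hbQ) hau.le (le_trans hut.le htb)
        (by linarith)
    have hfreq : (∃ᶠ u in 𝓝[J ∩ Set.Iio t] t, dist (e u) (e a) ≤ w) ∨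
        (∃ᶠ u in 𝓝[J ∩ Set.Iio t] t, dist (e b) (e u) ≤ w) := by
      refine Filter.frequently_or_distrib.1 (hev.frequently.mono ?_)
      intro u h
      exact min_le_iff.1 h
    rcases hfreq with h | h
    · have htd : Tendsto (fun u => dist (e u) (e a)) (𝓝[J ∩ Set.Iio t] t)
          (𝓝 (dist y (e a))) := hy.dist tendsto_const_nhds
      have : dist y (e a) ≤ w := le_of_tendsto_of_frequently htd h
      exact key a haQ y hyF (by rwa [dist_comm] at this)
    · have htd : Tendsto (fun u => dist (e b) (e u)) (𝓝[J ∩ Set.Iio t] t)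
          (𝓝 (dist (e b) y)) := Tendsto.dist tendsto_const_nhds hy
      have : dist (e b) y ≤ w := le_of_tendsto_of_frequently htd h
      exact key b hbQ y hyF this
end
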